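/- arXiv:1812.08485 — 9 statements merged into one kernel-verified Lean document; each statement's English description precedes it below -/
import Mathlib

section
/- Let E be a real inner product space, f : E → ℝ convex and differentiable with gradient ∇f L-Lipschitz continuous for some L > 0, and suppose the set Ω of minimizers of f is nonempty, with minimum value f*. Fix ᾱ ∈ (0, 1/L] and define the gradient descent iterates x_{k+1} = x_k − ᾱ ∇f(x_k) from any x_0 ∈ E. Then k·(f(x_k) − f*) → 0 as k → ∞; that is, f(x_k) − f* = o(1/k). -/
/-!
Each gradient step lowers `f` by at least `α/2 ‖∇f‖²` (descent lemma). Combined with the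
supporting-hyperplane inequality of convexity at `x_k`, this gives the Fejér-type estimate
`‖x_{k+1} - x*‖² ≤ ‖x_k - x*‖² - 2α (f(x_{k+1}) - f*)`, so the gaps `f(x_k) - f*` are
summable.
A nonnegative, nonincreasing, summable sequence is `o(1/k)` (Olivier's theorem).
-/

open RealInnerProductSpace Filter Topology

theorem ConvexOn.add_sub_le_of_hasFDerivAt {F : Type*} [NormedAddCommGroup F]
    [NormedSpace ℝ F] {s : Set F} {f : F → ℝ} {f' : F →L[ℝ] ℝ} {x y : F} (hf : ConvexOn ℝ s f)
    (hx : x ∈ s) (hy : y ∈ s) (hfx : HasFDerivAt f f' x) :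
    f x + f' (y - x) ≤ f y := by
  have hline : HasDerivAt (f ∘ (AffineMap.lineMap x y : ℝ →ᵃ[ℝ] F)) (f' (y - x)) 0 := by
    refine HasFDerivAt.comp_hasDerivAt (0 : ℝ) ?_ AffineMap.hasDerivAt_lineMap
    simpa using hfx
  have hslope := (hf.comp_affineMap (AffineMap.lineMap x y)).le_slope_of_hasDerivAt
    (by simpa using hx) (by simpa using hy) zero_lt_one hline
  simp only [slope_def_field, Function.comp_apply, AffineMap.lineMap_apply_zero,
    AffineMap.lineMap_apply_one, sub_zero, div_one] at hslope
  linarith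

section Gradient

variable {E : Type*} [NormedAddCommGroup E] [InnerProductSpace ℝ E]

theorem hasDerivAt_comp_add_smul {f : E → ℝ} {g x v : E} {t : ℝ}
    (hf : HasFDerivAt f (innerSL ℝ g) (x + t • v)) :
    HasDerivAt (fun s : ℝ => f (x + s • v)) ⟪g, v⟫ t := by
  have hγ : HasDerivAt (fun s : ℝ => x + s • v) v t := by
    simpa using ((hasDerivAt_id t).smul_const v).const_add x
  simpa [Function.comp_def] using hf.comp_hasDerivAt t hγ

/-- The descent lemma. -/
theorem apply_le_of_lipschitz_gradient {f : E → ℝ} {f' : E → E} {L : ℝ}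
    (hf : ∀ x, HasFDerivAt f (innerSL ℝ (f' x)) x)
    (hlip : ∀ x y, ‖f' x - f' y‖ ≤ L * ‖x - y‖) (x y : E) :
    f y ≤ f x + ⟪f' x, y - x⟫ + L / 2 * ‖y - x‖ ^ 2 := by
  set v := y - x
  -- `h` has derivative `⟪f' (x + t • v) - f' x, v⟫ - L t ‖v‖²`, which is `≤ 0` for `t ≥ 0`
  set h : ℝ → ℝ := fun t => f (x + t • v) - t * ⟪f' x, v⟫ - L / 2 * ‖v‖ ^ 2 * t ^ 2
  have hh : ∀ t,
      HasDerivAt h (⟪f' (x + t • v), v⟫ - ⟪f' x, v⟫ - L / 2 * ‖v‖ ^ 2 * (2 * t)) t :=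
    fun t => by
      simpa using! ((hasDerivAt_comp_add_smul (hf _)).sub
        ((hasDerivAt_id t).mul_const ⟪f' x, v⟫)).sub ((hasDerivAt_pow 2 t).const_mul _)
  have hanti : AntitoneOn h (Set.Ici 0) := by
    refine antitoneOn_of_hasDerivWithinAt_nonpos (convex_Ici 0)
      (fun t _ => (hh t).continuousAt.continuousWithinAt)
      (fun t _ => (hh t).hasDerivWithinAt) fun t ht => ?_
    rw [interior_Ici, Set.mem_Ioi] at ht
    have hgrad : ⟪f' (x + t • v) - f' x, v⟫ ≤ L * t * ‖v‖ ^ 2 :=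
      calc ⟪f' (x + t • v) - f' x, v⟫ ≤ ‖f' (x + t • v) - f' x‖ * ‖v‖ :=
            real_inner_le_norm _ _
        _ ≤ L * ‖t • v‖ * ‖v‖ := by
          gcongr
          simpa using hlip (x + t • v) x
        _ = L * t * ‖v‖ ^ 2 := by rw [norm_smul, Real.norm_of_nonneg ht.le]; ring
    rw [inner_sub_left] at hgrad
    linarith
  have := hanti Set.self_mem_Ici (Set.mem_Ici.2 zero_le_one) zero_le_one
  norm_num [h, v] at this
  linarith

variable {f : E → ℝ} {f' : E → E} {L α : ℝ}

theorem apply_sub_smul_gradient_le (hf : ∀ x, HasFDerivAt f (innerSL ℝ (f' x)) x)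
    (hlip : ∀ x y, ‖f' x - f' y‖ ≤ L * ‖x - y‖) (hα : 0 ≤ α) (hαL : α * L ≤ 1) (x : E) :
    f (x - α • f' x) ≤ f x - α / 2 * ‖f' x‖ ^ 2 := by
  have h := apply_le_of_lipschitz_gradient hf hlip x (x - α • f' x)
  rw [sub_sub_cancel_left, inner_neg_right, real_inner_smul_right, real_inner_self_eq_norm_sq,
    norm_neg, norm_smul, Real.norm_of_nonneg hα] at h
  nlinarith [mul_nonneg hα (sq_nonneg ‖f' x‖)]

theorem norm_sub_smul_gradient_sub_sq_le (hconv : ConvexOn ℝ Set.univ f)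
    (hf : ∀ x, HasFDerivAt f (innerSL ℝ (f' x)) x)
    (hlip : ∀ x y, ‖f' x - f' y‖ ≤ L * ‖x - y‖) (hα : 0 ≤ α) (hαL : α * L ≤ 1) (x z : E) :
    ‖x - α • f' x - z‖ ^ 2 ≤ ‖x - z‖ ^ 2 - 2 * α * (f (x - α • f' x) - f z) := by
  have hdescent := apply_sub_smul_gradient_le hf hlip hα hαL x
  have hsupport : f x + ⟪f' x, z - x⟫ ≤ f z :=
    hconv.add_sub_le_of_hasFDerivAt (Set.mem_univ x) (Set.mem_univ z) (hf x)
  have hexpand : ‖x - α • f' x - z‖ ^ 2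
      = ‖x - z‖ ^ 2 + 2 * α * ⟪f' x, z - x⟫ + α ^ 2 * ‖f' x‖ ^ 2 := by
    rw [sub_right_comm, norm_sub_sq_real, inner_smul_right, norm_smul, Real.norm_of_nonneg hα,
      real_inner_comm, ← neg_sub z x, inner_neg_right]
    ring
  rw [hexpand]
  nlinarith [mul_le_mul_of_nonneg_left hsupport hα]

end Gradient

theorem summable_of_le_sub_succ {δ d : ℕ → ℝ} (hδ : ∀ k, 0 ≤ δ k) (hd : ∀ k, 0 ≤ d k)
    (h : ∀ k, δ (k + 1) ≤ d k - d (k + 1)) : Summable δ := by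
  refine (summable_nat_add_iff 1).1
    (summable_of_sum_range_le (c := d 0) (fun k => hδ _) fun n => ?_)
  calc ∑ k ∈ Finset.range n, δ (k + 1) ≤ ∑ k ∈ Finset.range n, (d k - d (k + 1)) :=
        Finset.sum_le_sum fun k _ => h k
    _ = d 0 - d n := Finset.sum_range_sub' d n
    _ ≤ d 0 := sub_le_self _ (hd n)

/-- Olivier's theorem. -/
theorem Antitone.tendsto_nat_mul_of_summable {δ : ℕ → ℝ} (hanti : Antitone δ)
    (hδ : ∀ k, 0 ≤ δ k) (hsum : Summable δ) :
    Tendsto (fun n : ℕ => (n : ℝ) * δ n) atTop (𝓝 0) := by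
  -- `n δ n ≤ 2 (n - ⌊n/2⌋) δ n ≤ 2 ∑_{⌊n/2⌋ ≤ k < n} δ k`, a tail of the series
  have htail : Tendsto (fun n : ℕ => 2 * ∑' k, δ (k + n / 2)) atTop (𝓝 0) := by
    simpa using
      ((tendsto_sum_nat_add δ).comp (Nat.tendsto_div_const_atTop two_ne_zero)).const_mul 2
  refine tendsto_of_tendsto_of_tendsto_of_le_of_le tendsto_const_nhds htail
    (fun n => mul_nonneg n.cast_nonneg (hδ n)) fun n => ?_
  have hblock :
      ((n - n / 2 : ℕ) : ℝ) * δ n ≤ ∑ k ∈ Finset.range (n - n / 2), δ (k + n / 2) := by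
    simpa using Finset.card_nsmul_le_sum (Finset.range (n - n / 2)) (fun k => δ (k + n / 2))
      (δ n) fun k hk => hanti (by rw [Finset.mem_range] at hk; omega)
  have hhalf : (n : ℝ) ≤ 2 * ((n - n / 2 : ℕ) : ℝ) := by
    exact_mod_cast (by omega : n ≤ 2 * (n - n / 2))
  have htsum := ((summable_nat_add_iff (n / 2)).2 hsum).sum_le_tsum (Finset.range (n - n / 2))
    fun k _ => hδ _
  dsimp only
  nlinarith [hδ n]

/-- For `f` convex with `L`-Lipschitz gradient on a real inner
product space, gradient descent with fixed step `ᾱ ∈ (0, 1/L]` satisfies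
`f(x_k) − f* = o(1/k)`. -/
theorem gradient_descent_o_one_div_k
    {E : Type*} [NormedAddCommGroup E] [InnerProductSpace ℝ E]
    (f : E → ℝ) (f' : E → E) (L : ℝ) (hL : 0 < L)
    (hconv : ConvexOn ℝ Set.univ f)
    (hderiv : ∀ x, HasFDerivAt f (innerSL ℝ (f' x)) x)
    (hlip : ∀ x y, ‖f' x - f' y‖ ≤ L * ‖x - y‖)
    (xstar : E) (hxstar : ∀ y, f xstar ≤ f y)
    (α : ℝ) (hα0 : 0 < α) (hαL : α ≤ 1 / L)
    (x : ℕ → E) (hx : ∀ k, x (k + 1) = x k - α • f' (x k)) :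
    Filter.Tendsto (fun k : ℕ => (k : ℝ) * (f (x k) - f xstar))
      Filter.atTop (nhds 0) := by
  have hαL' : α * L ≤ 1 := (le_div_iff₀ hL).1 hαL
  have hgap : ∀ k, 0 ≤ f (x k) - f xstar := fun k => sub_nonneg.2 (hxstar _)
  have hanti : Antitone fun k => f (x k) - f xstar := antitone_nat_of_succ_le fun k => by
    have := apply_sub_smul_gradient_le hderiv hlip hα0.le hαL' (x k)
    rw [hx k]
    nlinarith [mul_nonneg hα0.le (sq_nonneg ‖f' (x k)‖)]
  have hsum : Summable fun k => 2 * α * (f (x k) - f xstar) := by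
    refine summable_of_le_sub_succ (d := fun k => ‖x k - xstar‖ ^ 2)
      (fun k => by have := hgap k; positivity) (fun k => sq_nonneg _) fun k => ?_
    have := norm_sub_smul_gradient_sub_sq_le hconv hderiv hlip hα0.le hαL' (x k) xstar
    rw [hx k]
    linarith
  exact hanti.tendsto_nat_mul_of_summable hgap
    ((summable_mul_left_iff (by positivity)).1 hsum)
end

section
/- Let E be a real inner product space, f : E → ℝ convex and differentiable with L-Lipschitz gradient (L > 0), with nonempty minimizer set Ω and minimum value f*. Fix ᾱ ∈ (0, 1/L] and let x_{k+1} = x_k − ᾱ ∇f(x_k). Then for every k ≥ 1 and every x̄ ∈ Ω, k·(f(x_k) − f*) ≤ ∑_{T=1}^{k} (f(x_T) − f*) ≤ ‖x_0 − x̄‖²/(2ᾱ); in particular f(x_k) − f* ≤ dist(x_0, Ω)²/(2ᾱ k). -/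
/-!
A gradient step decreases `f` by at least `α/2 ‖∇f x‖²` (descent lemma, using `Lα ≤ 1`).
Adding the supporting-hyperplane inequality `f x + ⟪∇f x, z - x⟫ ≤ f z` turns this into
`f x_{k+1} - f z ≤ (‖x_k - z‖² - ‖x_{k+1} - z‖²) / (2α)` for every `z`, which telescopes to
`∑_{T=1}^k (f x_T - f z) ≤ ‖x_0 - z‖² / (2α)`. As `f x_T` decreases, `k (f x_k - f z)` is at most
that sum; taking `z ∈ Ω` and then the infimum over `z` gives the bound by `dist(x_0, Ω)`.
-/

open AffineMap Metric

section FirstOrder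

open Set

variable {E : Type*} [NormedAddCommGroup E] [NormedSpace ℝ E] {f : E → ℝ} {D : E → E →L[ℝ] ℝ}

theorem hasDerivAt_comp_lineMap (hf : ∀ z, HasFDerivAt f (D z) z) (x y : E) (t : ℝ) :
    HasDerivAt (fun s => f (lineMap x y s)) (D (lineMap x y t) (y - x)) t :=
  (hf _).comp_hasDerivAt t hasDerivAt_lineMap

theorem ConvexOn.add_fderiv_le (hconv : ConvexOn ℝ univ f) (hf : ∀ z, HasFDerivAt f (D z) z)
    (x y : E) : f x + D x (y - x) ≤ f y := by
  have hline : ConvexOn ℝ univ (fun s : ℝ => f (lineMap x y s)) := by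
    simpa [Function.comp_def] using hconv.comp_affineMap (lineMap x y : ℝ →ᵃ[ℝ] E)
  have hslope := hline.le_slope_of_hasDerivAt (mem_univ 0) (mem_univ 1) one_pos
    (by simpa using hasDerivAt_comp_lineMap hf x y 0)
  rw [map_sub]
  simp only [slope_def_field, lineMap_apply_one, lineMap_apply_zero, sub_zero, div_one] at hslope
  linarith

theorem le_add_fderiv_add_sq_of_lipschitz {L : ℝ} (hf : ∀ z, HasFDerivAt f (D z) z)
    (hD : ∀ z w, ‖D z - D w‖ ≤ L * ‖z - w‖) (x y : E) :
    f y ≤ f x + D x (y - x) + L / 2 * ‖y - x‖ ^ 2 := by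
  set φ : ℝ → ℝ := fun t => f (lineMap x y t) - t * D x (y - x) - L / 2 * ‖y - x‖ ^ 2 * t ^ 2
  have hφ : ∀ t, HasDerivAt φ
      (D (lineMap x y t) (y - x) - D x (y - x) - L * ‖y - x‖ ^ 2 * t) t := fun t => by
    have := ((hasDerivAt_comp_lineMap hf x y t).sub ((hasDerivAt_id t).mul_const (D x (y - x)))).sub
      ((hasDerivAt_pow 2 t).const_mul (L / 2 * ‖y - x‖ ^ 2))
    exact this.congr_deriv (by
      simp only [one_mul, Nat.cast_ofNat, Nat.add_one_sub_one, pow_one]; ring)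
  have hφ' : ∀ t ∈ interior (Icc (0 : ℝ) 1),
      D (lineMap x y t) (y - x) - D x (y - x) - L * ‖y - x‖ ^ 2 * t ≤ 0 := by
    intro t ht
    rw [interior_Icc] at ht
    rw [sub_nonpos]
    calc D (lineMap x y t) (y - x) - D x (y - x)
        ≤ ‖D (lineMap x y t) - D x‖ * ‖y - x‖ := by
          rw [← sub_apply]
          exact (Real.le_norm_self _).trans (ContinuousLinearMap.le_opNorm _ _)
      _ ≤ L * ‖lineMap x y t - x‖ * ‖y - x‖ := by gcongr; exact hD _ _
      _ = L * ‖y - x‖ ^ 2 * t := by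
          rw [lineMap_apply_module', add_sub_cancel_right, norm_smul, Real.norm_of_nonneg ht.1.le]
          ring
  have hanti := antitoneOn_of_hasDerivWithinAt_nonpos (convex_Icc 0 1)
    (fun t _ => (hφ t).continuousAt.continuousWithinAt) (fun t _ => (hφ t).hasDerivWithinAt) hφ'
  have hφ01 := hanti (left_mem_Icc.2 zero_le_one) (right_mem_Icc.2 zero_le_one) zero_le_one
  simp only [φ, lineMap_apply_one, lineMap_apply_zero, one_mul, one_pow, mul_one, zero_mul,
    sub_zero, ne_eq, OfNat.ofNat_ne_zero, not_false_eq_true, zero_pow, mul_zero] at hφ01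
  linarith

end FirstOrder

open Finset

theorem Finset.sum_Icc_one_le_sub_of_le_sub {M : Type*} [AddCommGroup M] [PartialOrder M]
    [IsOrderedAddMonoid M] {a d : ℕ → M} (h : ∀ j, a (j + 1) ≤ d j - d (j + 1)) (k : ℕ) :
    ∑ T ∈ Icc 1 k, a T ≤ d 0 - d k := by
  induction k with
  | zero => simp
  | succ k ih =>
    rw [sum_Icc_succ_top (by omega)]
    calc ∑ T ∈ Icc 1 k, a T + a (k + 1) ≤ (d 0 - d k) + (d k - d (k + 1)) := add_le_add ih (h k)
      _ = d 0 - d (k + 1) := sub_add_sub_cancel _ _ _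

theorem Antitone.nsmul_le_sum_Icc_one {M : Type*} [AddCommMonoid M] [PartialOrder M]
    [IsOrderedAddMonoid M] {u : ℕ → M} (hu : Antitone u) (k : ℕ) :
    k • u k ≤ ∑ T ∈ Icc 1 k, u T := by
  simpa using card_nsmul_le_sum (Icc 1 k) u (u k) fun T hT => hu (mem_Icc.1 hT).2

theorem Metric.le_infDist_sq {X : Type*} [PseudoMetricSpace X] {s : Set X} {x : X} {a : ℝ}
    (hs : s.Nonempty) (h : ∀ y ∈ s, a ≤ dist x y ^ 2) : a ≤ infDist x s ^ 2 := by
  have hsqrt : √a ≤ infDist x s := (le_infDist hs).2 fun y hy => by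
    simpa [Real.sqrt_sq dist_nonneg] using Real.sqrt_le_sqrt (h y hy)
  exact (Real.sqrt_le_iff.1 hsqrt).2

section GradientDescent

variable {E : Type*} [NormedAddCommGroup E] [InnerProductSpace ℝ E] {f : E → ℝ} {f' : E → E}
  {L α : ℝ}

theorem apply_gradientStep_le (hf : ∀ z, HasFDerivAt f (innerSL ℝ (f' z)) z)
    (hlip : ∀ z w, ‖f' z - f' w‖ ≤ L * ‖z - w‖) (hα : 0 ≤ α) (hLα : L * α ≤ 1) (x : E) :
    f (x - α • f' x) ≤ f x - α / 2 * ‖f' x‖ ^ 2 := by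
  have hD : ∀ z w, ‖innerSL ℝ (f' z) - innerSL ℝ (f' w)‖ ≤ L * ‖z - w‖ := fun z w => by
    simpa only [← map_sub, innerSL_apply_norm] using hlip z w
  have hdesc := le_add_fderiv_add_sq_of_lipschitz hf hD x (x - α • f' x)
  simp only [sub_sub_cancel_left, innerSL_apply_apply, inner_neg_right, real_inner_smul_right,
    real_inner_self_eq_norm_sq, norm_neg, norm_smul, Real.norm_of_nonneg hα] at hdesc
  nlinarith [mul_le_mul_of_nonneg_right hLα (by positivity : 0 ≤ α * ‖f' x‖ ^ 2)]

theorem apply_gradientStep_sub_le (hconv : ConvexOn ℝ Set.univ f)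
    (hf : ∀ z, HasFDerivAt f (innerSL ℝ (f' z)) z) (hlip : ∀ z w, ‖f' z - f' w‖ ≤ L * ‖z - w‖)
    (hα : 0 < α) (hLα : L * α ≤ 1) (x z : E) :
    f (x - α • f' x) - f z ≤ (‖x - z‖ ^ 2 - ‖x - α • f' x - z‖ ^ 2) / (2 * α) := by
  have hstep := apply_gradientStep_le hf hlip hα.le hLα x
  have hsupport := hconv.add_fderiv_le hf x z
  have hexpand : ‖x - α • f' x - z‖ ^ 2
      = ‖x - z‖ ^ 2 - 2 * α * inner ℝ (f' x) (x - z) + α ^ 2 * ‖f' x‖ ^ 2 := by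
    rw [sub_right_comm, norm_sub_sq_real, real_inner_smul_right, real_inner_comm, norm_smul,
      Real.norm_of_nonneg hα.le]
    ring
  rw [innerSL_apply_apply, ← neg_sub x z, inner_neg_right] at hsupport
  rw [hexpand, le_div_iff₀ (by positivity)]
  nlinarith

theorem antitone_apply_of_gradientDescent (hf : ∀ z, HasFDerivAt f (innerSL ℝ (f' z)) z)
    (hlip : ∀ z w, ‖f' z - f' w‖ ≤ L * ‖z - w‖) (hα : 0 ≤ α) (hLα : L * α ≤ 1) {x : ℕ → E}
    (hx : ∀ k, x (k + 1) = x k - α • f' (x k)) : Antitone (fun k => f (x k)) :=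
  antitone_nat_of_succ_le fun k => by
    rw [hx]
    exact (apply_gradientStep_le hf hlip hα hLα (x k)).trans (sub_le_self _ (by positivity))

theorem sum_apply_sub_le_of_gradientDescent (hconv : ConvexOn ℝ Set.univ f)
    (hf : ∀ z, HasFDerivAt f (innerSL ℝ (f' z)) z) (hlip : ∀ z w, ‖f' z - f' w‖ ≤ L * ‖z - w‖)
    (hα : 0 < α) (hLα : L * α ≤ 1) {x : ℕ → E} (hx : ∀ k, x (k + 1) = x k - α • f' (x k))
    (z : E) (k : ℕ) :
    ∑ T ∈ Icc 1 k, (f (x T) - f z) ≤ ‖x 0 - z‖ ^ 2 / (2 * α) := by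
  have htele := Finset.sum_Icc_one_le_sub_of_le_sub (a := fun T => f (x T) - f z)
    (d := fun T => ‖x T - z‖ ^ 2 / (2 * α))
    (fun j => by
      simpa only [hx j, sub_div] using apply_gradientStep_sub_le hconv hf hlip hα hLα (x j) z) k
  exact htele.trans (sub_le_self _ (by positivity))

end GradientDescent

/-- The classical `O(1/k)` bound for fixed-step gradient descent:
for every `k ≥ 1` and every minimizer `x̄`,
`k (f(x_k) − f*) ≤ ∑_{T=1}^{k} (f(x_T) − f*) ≤ ‖x_0 − x̄‖²/(2ᾱ)`, and in particular
`f(x_k) − f* ≤ dist(x_0, Ω)²/(2ᾱk)`. -/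
theorem gradient_descent_O_one_div_k
    {E : Type*} [NormedAddCommGroup E] [InnerProductSpace ℝ E]
    (f : E → ℝ) (f' : E → E) (L : ℝ) (hL : 0 < L)
    (hconv : ConvexOn ℝ Set.univ f)
    (hderiv : ∀ x, HasFDerivAt f (innerSL ℝ (f' x)) x)
    (hlip : ∀ x y, ‖f' x - f' y‖ ≤ L * ‖x - y‖)
    (Ω : Set E) (hΩ : Ω = {z | ∀ y, f z ≤ f y})
    (xstar : E) (hxstar : xstar ∈ Ω)
    (α : ℝ) (hα0 : 0 < α) (hαL : α ≤ 1 / L)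
    (x : ℕ → E) (hx : ∀ k, x (k + 1) = x k - α • f' (x k)) :
    ∀ k : ℕ, 1 ≤ k →
      (∀ xbar ∈ Ω,
        (k : ℝ) * (f (x k) - f xstar) ≤ ∑ T ∈ Finset.Icc 1 k, (f (x T) - f xstar) ∧
        ∑ T ∈ Finset.Icc 1 k, (f (x T) - f xstar) ≤ ‖x 0 - xbar‖ ^ 2 / (2 * α)) ∧
      f (x k) - f xstar ≤ Metric.infDist (x 0) Ω ^ 2 / (2 * α * k) := by
  intro k hk
  have hLα : L * α ≤ 1 := by rwa [le_div_iff₀' hL] at hαL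
  have hmin : ∀ xbar ∈ Ω, f xbar = f xstar := by
    subst hΩ
    exact fun xbar hxbar => le_antisymm (hxbar xstar) (hxstar xbar)
  have hbounds : ∀ xbar ∈ Ω,
      (k : ℝ) * (f (x k) - f xstar) ≤ ∑ T ∈ Icc 1 k, (f (x T) - f xstar) ∧
      ∑ T ∈ Icc 1 k, (f (x T) - f xstar) ≤ ‖x 0 - xbar‖ ^ 2 / (2 * α) := by
    intro xbar hxbar
    constructor
    · have hanti := antitone_apply_of_gradientDescent hderiv hlip hα0.le hLα hx
      simpa using Antitone.nsmul_le_sum_Icc_one (u := fun T => f (x T) - f xstar)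
        (fun i j hij => sub_le_sub_right (hanti hij) (f xstar)) k
    · simpa [hmin xbar hxbar] using
        sum_apply_sub_le_of_gradientDescent hconv hderiv hlip hα0 hLα hx xbar k
  refine ⟨hbounds, ?_⟩
  rw [le_div_iff₀' (by positivity)]
  refine Metric.le_infDist_sq ⟨xstar, hxstar⟩ fun xbar hxbar => ?_
  have hkbound := (hbounds xbar hxbar).1.trans (hbounds xbar hxbar).2
  rw [le_div_iff₀' (by positivity)] at hkbound
  rw [dist_eq_norm]
  linarith
end

section
/- Let E be a real inner product space, f : E → ℝ convex and differentiable with L-Lipschitz gradient (L > 0), with nonempty minimizer set Ω and f* = min f. Let γ ∈ (0,1], C₂ ∈ (0, (2−γ)/L], C₁ ≥ C₂, and suppose the iterates x_{k+1} = x_k − α_k ∇f(x_k) are generated with step sizes satisfying α_k ∈ [C₂, C₁] and the sufficient decrease condition f(x_k − α_k ∇f(x_k)) ≤ f(x_k) − (γ α_k / 2) ‖∇f(x_k)‖² for all k. Then for every x̄ ∈ Ω and every k ≥ 0: ‖x_{k+1} − x̄‖² ≤ ‖x_0 − x̄‖² + (2C₁/γ)(f(x_0) − f(x_{k+1})) +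 2C₂ ∑_{T=0}^{k} (f* − f(x_T)) ≤ ‖x_0 − x̄‖² + (2C₁/γ)(f(x_0) − f*). In particular all iterates lie in a bounded set. -/
/-!
Write `g = ∇f(x_k)`. Expanding the square along the step `x_{k+1} = x_k - α_k g` gives
`‖x_{k+1} - x̄‖² = ‖x_k - x̄‖² + 2 α_k ⟪g, x̄ - x_k⟫ + α_k² ‖g‖²`.
By convexity the middle term is at most `2 α_k (f x̄ - f x_k) ≤ 2 C₂ (f x̄ - f x_k)`, the factor
being nonpositive, and by sufficient decrease the last term is at most
`(2 C₁ / γ) (f x_k - f x_{k+1})`. Summing these one-step bounds telescopes to the first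
inequality; the second, which bounds every `‖x_n - x̄‖`, follows from `f x̄ ≤ f`.
-/

open Finset RealInnerProductSpace

theorem ConvexOn.apply_sub_le_of_hasFDerivAt {F : Type*} [NormedAddCommGroup F] [NormedSpace ℝ F]
    {s : Set F} {f : F → ℝ} {f' : F →L[ℝ] ℝ} {a b : F} (hf : ConvexOn ℝ s f) (ha : a ∈ s)
    (hb : b ∈ s) (hd : HasFDerivAt f f' a) : f' (b - a) ≤ f b - f a := by
  have hline : HasDerivAt (f ∘ AffineMap.lineMap (k := ℝ) a b) (f' (b - a)) 0 := by
    rw [← AffineMap.lineMap_apply_zero (k := ℝ) a b] at hd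
    exact hd.comp_hasDerivAt (0 : ℝ) AffineMap.hasDerivAt_lineMap
  simpa [slope_def_field] using (hf.comp_affineMap (AffineMap.lineMap a b)).le_slope_of_hasDerivAt
    (by simpa using ha) (by simpa using hb) zero_lt_one hline

section GradientStep

variable {E : Type*} [NormedAddCommGroup E] [InnerProductSpace ℝ E]

theorem norm_gradient_step_sub_sq_le {f : E → ℝ} {x g xbar : E} {c γ C₁ C₂ : ℝ}
    (hgrad : ⟪g, xbar - x⟫ ≤ f xbar - f x) (hmin : f xbar ≤ f x)
    (hdec : f (x - c • g) ≤ f x - γ * c / 2 * ‖g‖ ^ 2) (hγ : 0 < γ) (hC₂ : 0 ≤ C₂)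
    (hc : c ∈ Set.Icc C₂ C₁) :
    ‖x - c • g - xbar‖ ^ 2 ≤
      ‖x - xbar‖ ^ 2 + 2 * C₁ / γ * (f x - f (x - c • g)) + 2 * C₂ * (f xbar - f x) := by
  obtain ⟨hC₂c, hcC₁⟩ := hc
  have hc0 : 0 ≤ c := hC₂.trans hC₂c
  have hexpand :
      ‖x - c • g - xbar‖ ^ 2 = ‖x - xbar‖ ^ 2 + 2 * c * ⟪g, xbar - x⟫ + c ^ 2 * ‖g‖ ^ 2 := by
    rw [show x - c • g - xbar = (x - xbar) - c • g by abel, norm_sub_sq_real, inner_smul_right,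
      norm_smul, mul_pow, Real.norm_eq_abs, sq_abs, ← neg_sub xbar x, inner_neg_left,
      real_inner_comm]
    ring
  have hcross : 2 * c * ⟪g, xbar - x⟫ ≤ 2 * C₂ * (f xbar - f x) :=
    calc 2 * c * ⟪g, xbar - x⟫ ≤ 2 * c * (f xbar - f x) := by gcongr
      _ ≤ 2 * C₂ * (f xbar - f x) := by nlinarith
  have hstep : c ^ 2 * ‖g‖ ^ 2 ≤ 2 * C₁ / γ * (f x - f (x - c • g)) := by
    have hdrop : γ * c * ‖g‖ ^ 2 ≤ 2 * (f x - f (x - c • g)) := by linarith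
    have hdrop0 : 0 ≤ f x - f (x - c • g) := by
      have : 0 ≤ γ * c * ‖g‖ ^ 2 := by positivity
      linarith
    rw [div_mul_eq_mul_div, le_div_iff₀ hγ]
    calc c ^ 2 * ‖g‖ ^ 2 * γ = c * (γ * c * ‖g‖ ^ 2) := by ring
      _ ≤ c * (2 * (f x - f (x - c • g))) := by gcongr
      _ ≤ 2 * C₁ * (f x - f (x - c • g)) := by nlinarith
  linarith

theorem norm_iterate_sub_sq_le {f : E → ℝ} {f' : E → E} {x : ℕ → E} {α : ℕ → ℝ} {xbar : E}
    {γ C₁ C₂ : ℝ} (hgrad : ∀ y, ⟪f' y, xbar - y⟫ ≤ f xbar - f y) (hmin : ∀ y, f xbar ≤ f y)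
    (hγ : 0 < γ) (hC₂ : 0 ≤ C₂) (hα : ∀ k, α k ∈ Set.Icc C₂ C₁)
    (hx : ∀ k, x (k + 1) = x k - α k • f' (x k))
    (hdec : ∀ k, f (x k - α k • f' (x k)) ≤ f (x k) - γ * α k / 2 * ‖f' (x k)‖ ^ 2) (n : ℕ) :
    ‖x n - xbar‖ ^ 2 ≤ ‖x 0 - xbar‖ ^ 2 + 2 * C₁ / γ * (f (x 0) - f (x n)) +
      2 * C₂ * ∑ T ∈ range n, (f xbar - f (x T)) := by
  have hstep : ∀ k, ‖x (k + 1) - xbar‖ ^ 2 - ‖x k - xbar‖ ^ 2 ≤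
      2 * C₁ / γ * (f (x k) - f (x (k + 1))) + 2 * C₂ * (f xbar - f (x k)) := by
    intro k
    have := norm_gradient_step_sub_sq_le (hgrad (x k)) (hmin (x k)) (hdec k) hγ hC₂ (hα k)
    rw [← hx k] at this
    linarith
  have := sum_le_sum fun k (_ : k ∈ range n) => hstep k
  rw [sum_range_sub (fun k => ‖x k - xbar‖ ^ 2), sum_add_distrib, ← mul_sum, ← mul_sum,
    sum_range_sub' (fun k => f (x k))] at this
  linarith

end GradientStep

theorem isBounded_range_of_norm_sub_sq_le {F ι : Type*} [SeminormedAddCommGroup F] {x : ι → F}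
    (c : F) {B : ℝ} (h : ∀ i, ‖x i - c‖ ^ 2 ≤ B) : Bornology.IsBounded (Set.range x) :=
  (Metric.isBounded_closedBall (x := c) (r := √B)).subset <| Set.range_subset_iff.2 fun i => by
    rw [Metric.mem_closedBall, dist_eq_norm]
    exact Real.le_sqrt_of_sq_le (h i)

theorem gradient_descent_line_search_bounded_iterates_general
    {E : Type*} [NormedAddCommGroup E] [InnerProductSpace ℝ E]
    (f : E → ℝ) (f' : E → E)
    (hconv : ConvexOn ℝ Set.univ f)
    (hderiv : ∀ y, HasFDerivAt f (innerSL ℝ (f' y)) y)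
    (Ω : Set E) (hΩ : Ω = {z | ∀ y, f z ≤ f y}) (hΩne : Ω.Nonempty)
    (γ C₁ C₂ : ℝ) (hγ0 : 0 < γ)
    (hC₂0 : 0 < C₂) (hC₁ : C₂ ≤ C₁)
    (α : ℕ → ℝ) (hα : ∀ k, α k ∈ Set.Icc C₂ C₁)
    (x : ℕ → E) (hx : ∀ k, x (k + 1) = x k - α k • f' (x k))
    (hdec : ∀ k, f (x k - α k • f' (x k)) ≤
      f (x k) - γ * α k / 2 * ‖f' (x k)‖ ^ 2) :
    (∀ xbar ∈ Ω, ∀ k : ℕ,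
      ‖x (k + 1) - xbar‖ ^ 2 ≤
          ‖x 0 - xbar‖ ^ 2 + (2 * C₁ / γ) * (f (x 0) - f (x (k + 1))) +
            2 * C₂ * ∑ T ∈ Finset.range (k + 1), (f xbar - f (x T)) ∧
      ‖x 0 - xbar‖ ^ 2 + (2 * C₁ / γ) * (f (x 0) - f (x (k + 1))) +
            2 * C₂ * ∑ T ∈ Finset.range (k + 1), (f xbar - f (x T)) ≤
          ‖x 0 - xbar‖ ^ 2 + (2 * C₁ / γ) * (f (x 0) - f xbar)) ∧
    Bornology.IsBounded (Set.range x) := by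
  have hmin : ∀ xbar ∈ Ω, ∀ y, f xbar ≤ f y := by
    subst hΩ
    exact fun _ h => h
  have hgrad (y z : E) : ⟪f' y, z - y⟫ ≤ f z - f y := by
    simpa using hconv.apply_sub_le_of_hasFDerivAt trivial trivial (hderiv y)
  have hC₁γ : 0 ≤ 2 * C₁ / γ := by
    have := hC₂0.trans_le hC₁
    positivity
  have hbound : ∀ xbar ∈ Ω, ∀ n,
      ‖x n - xbar‖ ^ 2 ≤ ‖x 0 - xbar‖ ^ 2 + 2 * C₁ / γ * (f (x 0) - f (x n)) +
        2 * C₂ * ∑ T ∈ range n, (f xbar - f (x T)) ∧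
      ‖x 0 - xbar‖ ^ 2 + 2 * C₁ / γ * (f (x 0) - f (x n)) +
        2 * C₂ * ∑ T ∈ range n, (f xbar - f (x T)) ≤
      ‖x 0 - xbar‖ ^ 2 + 2 * C₁ / γ * (f (x 0) - f xbar) := by
    intro xbar hxbar n
    refine ⟨norm_iterate_sub_sq_le (fun y => hgrad y xbar) (hmin xbar hxbar) hγ0 hC₂0.le hα hx
      hdec n, ?_⟩
    have hsum : ∑ T ∈ range n, (f xbar - f (x T)) ≤ 0 :=
      sum_nonpos fun T _ => sub_nonpos.2 (hmin xbar hxbar (x T))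
    linarith [mul_le_mul_of_nonneg_left (hmin xbar hxbar (x n)) hC₁γ,
      mul_nonpos_of_nonneg_of_nonpos (by positivity : 0 ≤ 2 * C₂) hsum]
  refine ⟨fun xbar hxbar k => hbound xbar hxbar (k + 1), ?_⟩
  obtain ⟨xbar, hxbar⟩ := hΩne
  exact isBounded_range_of_norm_sub_sq_le xbar fun n => (hbound xbar hxbar n).1.trans
    (hbound xbar hxbar n).2

/-- **Lemma 3 of the paper.** For gradient descent with step sizes
`α_k ∈ [C₂, C₁]` satisfying the sufficient decrease condition, the iterates satisfy
`‖x_{k+1} − x̄‖² ≤ ‖x_0 − x̄‖² + (2C₁/γ)(f(x_0) − f(x_{k+1})) + 2C₂ ∑_{T=0}^k (f* − f(x_T))`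
`≤ ‖x_0 − x̄‖² + (2C₁/γ)(f(x_0) − f*)` for every minimizer `x̄`; in particular all
iterates lie in a bounded set. -/
theorem gradient_descent_line_search_bounded_iterates
    {E : Type*} [NormedAddCommGroup E] [InnerProductSpace ℝ E]
    (f : E → ℝ) (f' : E → E) (L : ℝ) (hL : 0 < L)
    (hconv : ConvexOn ℝ Set.univ f)
    (hderiv : ∀ y, HasFDerivAt f (innerSL ℝ (f' y)) y)
    (hlip : ∀ y z, ‖f' y - f' z‖ ≤ L * ‖y - z‖)
    (Ω : Set E) (hΩ : Ω = {z | ∀ y, f z ≤ f y}) (hΩne : Ω.Nonempty)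
    (γ C₁ C₂ : ℝ) (hγ0 : 0 < γ) (hγ1 : γ ≤ 1)
    (hC₂0 : 0 < C₂) (hC₂L : C₂ ≤ (2 - γ) / L) (hC₁ : C₂ ≤ C₁)
    (α : ℕ → ℝ) (hα : ∀ k, α k ∈ Set.Icc C₂ C₁)
    (x : ℕ → E) (hx : ∀ k, x (k + 1) = x k - α k • f' (x k))
    (hdec : ∀ k, f (x k - α k • f' (x k)) ≤
      f (x k) - γ * α k / 2 * ‖f' (x k)‖ ^ 2) :
    (∀ xbar ∈ Ω, ∀ k : ℕ,
      ‖x (k + 1) - xbar‖ ^ 2 ≤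
          ‖x 0 - xbar‖ ^ 2 + (2 * C₁ / γ) * (f (x 0) - f (x (k + 1))) +
            2 * C₂ * ∑ T ∈ Finset.range (k + 1), (f xbar - f (x T)) ∧
      ‖x 0 - xbar‖ ^ 2 + (2 * C₁ / γ) * (f (x 0) - f (x (k + 1))) +
            2 * C₂ * ∑ T ∈ Finset.range (k + 1), (f xbar - f (x T)) ≤
          ‖x 0 - xbar‖ ^ 2 + (2 * C₁ / γ) * (f (x 0) - f xbar)) ∧
    Bornology.IsBounded (Set.range x) :=
  gradient_descent_line_search_bounded_iterates_general f f' hconv hderiv Ω hΩ hΩne γ C₁ C₂ hγ0 hC₂0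
    hC₁ α hα x hx hdec
end

section
/- Let f : ℝⁿ → ℝ be convex and differentiable with L-Lipschitz gradient (L > 0), with nonempty minimizer set Ω and f* = min f. Let γ ∈ (0,1], C₂ ∈ (0, (2−γ)/L], C₁ ≥ C₂, and suppose x_{k+1} = x_k − α_k ∇f(x_k) with α_k ∈ [C₂, C₁] and f(x_{k+1}) ≤ f(x_k) − (γ α_k / 2) ‖∇f(x_k)‖² for all k. Then dist(x_k, Ω) → 0 as k → ∞. -/
/-!
For a minimizer `m` consider the energy `V_m(y) = ‖y - m‖² + (2 C₁ / γ) (f y - f m)`. Expanding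
`‖x_{k+1} - m‖²`, convexity bounds the cross term by `-2 α_k (f x_k - f m)`, and the sufficient
decrease condition bounds `α_k² ‖∇f(x_k)‖²` by `(2 C₁ / γ) (f x_k - f x_{k+1})`, which the second
summand of `V_m` absorbs. Hence `V_m(x_{k+1}) + 2 α_k (f x_k - f m) ≤ V_m(x_k)`: the iterates stay
bounded and `∑ (f x_k - f m) < ∞`, so `f x_k → min f`. A cluster point `p` is therefore a minimizer;
`V_p(x_k)` is antitone and tends to `0` along a subsequence, hence `x_k → p ∈ Ω`.
-/

open Filter Topology Set Finset

theorem ConvexOn.add_inner_sub_le_of_hasGradientAt {E : Type*} [NormedAddCommGroup E]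
    [InnerProductSpace ℝ E] [CompleteSpace E] {f : E → ℝ} {s : Set E} (hf : ConvexOn ℝ s f)
    {g x y : E} (hx : x ∈ s) (hy : y ∈ s) (hg : HasGradientAt f g x) :
    f x + inner ℝ g (y - x) ≤ f y := by
  let ℓ : ℝ →ᵃ[ℝ] E := AffineMap.lineMap x y
  have hderiv : HasDerivAt (f ∘ ℓ) (inner ℝ g (y - x)) 0 := by
    have hg' : HasFDerivAt f (InnerProductSpace.toDual ℝ E g) (ℓ 0) := by
      simpa [ℓ] using hasGradientAt_iff_hasFDerivAt.mp hg
    simpa using hg'.comp_hasDerivAt 0 AffineMap.hasDerivAt_lineMap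
  have hslope := (hf.comp_affineMap ℓ).le_slope_of_hasDerivAt (by simpa [ℓ] using hx)
    (by simpa [ℓ] using hy) zero_lt_one hderiv
  simp only [slope, ℓ, Function.comp_apply, AffineMap.lineMap_apply_one,
    AffineMap.lineMap_apply_zero, sub_zero, inv_one, vsub_eq_sub, one_smul] at hslope
  linarith

section

variable {E : Type*} [NormedAddCommGroup E]

def descentEnergy (f : E → ℝ) (c : ℝ) (m y : E) : ℝ := ‖y - m‖ ^ 2 + c * (f y - f m)

@[simp]
theorem descentEnergy_self (f : E → ℝ) (c : ℝ) (m : E) : descentEnergy f c m m = 0 := by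
  simp [descentEnergy]

theorem sq_norm_sub_le_descentEnergy {f : E → ℝ} {c : ℝ} {m y : E} (hc : 0 ≤ c)
    (hm : f m ≤ f y) : ‖y - m‖ ^ 2 ≤ descentEnergy f c m y :=
  le_add_of_nonneg_right (mul_nonneg hc (sub_nonneg.mpr hm))

theorem continuous_descentEnergy {f : E → ℝ} (hf : Continuous f) (c : ℝ) (m : E) :
    Continuous (descentEnergy f c m) := by
  unfold descentEnergy
  fun_prop

variable [InnerProductSpace ℝ E]

theorem descentEnergy_sub_smul_add_le {f : E → ℝ} {x g m : E} {a C γ : ℝ}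
    (hsub : f x + inner ℝ g (m - x) ≤ f m) (hγ : 0 < γ) (ha : 0 ≤ a) (haC : a ≤ C)
    (hdec : f (x - a • g) ≤ f x - γ * a / 2 * ‖g‖ ^ 2) :
    descentEnergy f (2 * C / γ) m (x - a • g) + 2 * a * (f x - f m)
      ≤ descentEnergy f (2 * C / γ) m x := by
  have hexpand : ‖x - a • g - m‖ ^ 2
      = ‖x - m‖ ^ 2 - 2 * a * inner ℝ g (x - m) + a ^ 2 * ‖g‖ ^ 2 := by
    rw [show x - a • g - m = (x - m) - a • g by abel, norm_sub_sq_real, real_inner_smul_right,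
      real_inner_comm, norm_smul, mul_pow, Real.norm_eq_abs, sq_abs]
    ring
  have hinner : f x - f m ≤ inner ℝ g (x - m) := by
    rw [← neg_sub m x, inner_neg_right]
    linarith
  have hsq : a ^ 2 * ‖g‖ ^ 2 ≤ 2 * C / γ * (f x - f (x - a • g)) := by
    have hdrop : γ * a / 2 * ‖g‖ ^ 2 ≤ f x - f (x - a • g) := by linarith
    have hdrop_nonneg : 0 ≤ f x - f (x - a • g) := le_trans (by positivity) hdrop
    rw [div_mul_eq_mul_div, le_div_iff₀ hγ]
    calc a ^ 2 * ‖g‖ ^ 2 * γ = 2 * a * (γ * a / 2 * ‖g‖ ^ 2) := by ring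
      _ ≤ 2 * a * (f x - f (x - a • g)) := by gcongr
      _ ≤ 2 * C * (f x - f (x - a • g)) := by gcongr
  unfold descentEnergy
  linarith [mul_le_mul_of_nonneg_left hinner ha]

structure IsLineSearchDescent (f : E → ℝ) (f' : E → E) (γ C₂ C₁ : ℝ) (α : ℕ → ℝ) (x : ℕ → E) :
    Prop where
  step_mem : ∀ k, α k ∈ Icc C₂ C₁
  update : ∀ k, x (k + 1) = x k - α k • f' (x k)
  sufficient_decrease : ∀ k, f (x (k + 1)) ≤ f (x k) - γ * α k / 2 * ‖f' (x k)‖ ^ 2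

namespace IsLineSearchDescent

variable {f : E → ℝ} {f' : E → E} {γ C₂ C₁ : ℝ} {α : ℕ → ℝ} {x : ℕ → E} {m : E}

theorem energy_coeff_nonneg (h : IsLineSearchDescent f f' γ C₂ C₁ α x) (hγ : 0 < γ)
    (hC₂ : 0 ≤ C₂) : 0 ≤ 2 * C₁ / γ := by
  have : 0 ≤ C₁ := hC₂.trans ((h.step_mem 0).1.trans (h.step_mem 0).2)
  positivity

variable [CompleteSpace E]

theorem descentEnergy_succ_add_le (h : IsLineSearchDescent f f' γ C₂ C₁ α x)
    (hconv : ConvexOn ℝ univ f) (hderiv : ∀ y, HasGradientAt f (f' y) y) (hγ : 0 < γ)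
    (hC₂ : 0 ≤ C₂) (k : ℕ) :
    descentEnergy f (2 * C₁ / γ) m (x (k + 1)) + 2 * α k * (f (x k) - f m)
      ≤ descentEnergy f (2 * C₁ / γ) m (x k) := by
  rw [h.update]
  exact descentEnergy_sub_smul_add_le
    (hconv.add_inner_sub_le_of_hasGradientAt (mem_univ _) (mem_univ _) (hderiv _)) hγ
    (hC₂.trans (h.step_mem k).1) (h.step_mem k).2 (h.update k ▸ h.sufficient_decrease k)

theorem antitone_descentEnergy (h : IsLineSearchDescent f f' γ C₂ C₁ α x)
    (hconv : ConvexOn ℝ univ f) (hderiv : ∀ y, HasGradientAt f (f' y) y) (hγ : 0 < γ)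
    (hC₂ : 0 ≤ C₂) (hm : ∀ y, f m ≤ f y) :
    Antitone fun k ↦ descentEnergy f (2 * C₁ / γ) m (x k) := by
  refine antitone_nat_of_succ_le fun k ↦ ?_
  linarith [h.descentEnergy_succ_add_le hconv hderiv hγ hC₂ k (m := m),
    mul_nonneg (hC₂.trans (h.step_mem k).1) (sub_nonneg.mpr (hm (x k)))]

theorem sum_gap_add_descentEnergy_le (h : IsLineSearchDescent f f' γ C₂ C₁ α x)
    (hconv : ConvexOn ℝ univ f) (hderiv : ∀ y, HasGradientAt f (f' y) y) (hγ : 0 < γ)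
    (hC₂ : 0 ≤ C₂) (N : ℕ) :
    ∑ k ∈ range N, 2 * α k * (f (x k) - f m) + descentEnergy f (2 * C₁ / γ) m (x N)
      ≤ descentEnergy f (2 * C₁ / γ) m (x 0) := by
  induction N with
  | zero => simp
  | succ N ih =>
    rw [sum_range_succ]
    linarith [h.descentEnergy_succ_add_le hconv hderiv hγ hC₂ N (m := m)]

theorem tendsto_value_of_minimizer (h : IsLineSearchDescent f f' γ C₂ C₁ α x)
    (hconv : ConvexOn ℝ univ f) (hderiv : ∀ y, HasGradientAt f (f' y) y) (hγ : 0 < γ)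
    (hC₂ : 0 < C₂) (hm : ∀ y, f m ≤ f y) :
    Tendsto (fun k ↦ f (x k)) atTop (𝓝 (f m)) := by
  have hsum : Summable fun k ↦ f (x k) - f m := by
    refine summable_of_sum_range_le (c := descentEnergy f (2 * C₁ / γ) m (x 0) / (2 * C₂))
      (fun k ↦ sub_nonneg.mpr (hm _)) fun N ↦ ?_
    rw [le_div_iff₀ (by positivity), sum_mul]
    have hgap : ∀ k ∈ range N, (f (x k) - f m) * (2 * C₂) ≤ 2 * α k * (f (x k) - f m) :=
      fun k _ ↦ by
        linarith [mul_le_mul_of_nonneg_right (h.step_mem k).1 (sub_nonneg.mpr (hm (x k)))]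
    linarith [sum_le_sum hgap, h.sum_gap_add_descentEnergy_le hconv hderiv hγ hC₂.le N (m := m),
      sq_norm_sub_le_descentEnergy (h.energy_coeff_nonneg hγ hC₂.le) (hm (x N)),
      sq_nonneg ‖x N - m‖]
  simpa using hsum.tendsto_atTop_zero.add_const (f m)

theorem exists_tendsto_minimizer [ProperSpace E] (h : IsLineSearchDescent f f' γ C₂ C₁ α x)
    (hconv : ConvexOn ℝ univ f) (hderiv : ∀ y, HasGradientAt f (f' y) y)
    (hmin : ∃ m, ∀ y, f m ≤ f y) (hγ : 0 < γ) (hC₂ : 0 < C₂) :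
    ∃ p, (∀ y, f p ≤ f y) ∧ Tendsto x atTop (𝓝 p) := by
  obtain ⟨m, hm⟩ := hmin
  set c := 2 * C₁ / γ
  have hc : 0 ≤ c := h.energy_coeff_nonneg hγ hC₂.le
  have hcont : Continuous f := Differentiable.continuous fun y ↦ (hderiv y).differentiableAt
  have hbounded : ∀ k, x k ∈ Metric.closedBall m √(descentEnergy f c m (x 0)) := fun k ↦ by
    rw [Metric.mem_closedBall, dist_eq_norm]
    refine Real.le_sqrt_of_sq_le ((sq_norm_sub_le_descentEnergy hc (hm _)).trans ?_)
    exact h.antitone_descentEnergy hconv hderiv hγ hC₂.le hm (Nat.zero_le k)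
  obtain ⟨p, -, φ, hφ, hxφ⟩ := tendsto_subseq_of_bounded Metric.isBounded_closedBall hbounded
  have hfp : f p = f m := tendsto_nhds_unique ((hcont.tendsto p).comp hxφ)
    ((h.tendsto_value_of_minimizer hconv hderiv hγ hC₂ hm).comp hφ.tendsto_atTop)
  have hp : ∀ y, f p ≤ f y := hfp ▸ hm
  have henergy : Tendsto (fun k ↦ descentEnergy f c p (x k)) atTop (𝓝 0) := by
    rw [tendsto_iff_tendsto_subseq_of_antitone
      (h.antitone_descentEnergy hconv hderiv hγ hC₂.le hp) hφ.tendsto_atTop]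
    have hsub := ((continuous_descentEnergy hcont c p).tendsto p).comp hxφ
    rwa [descentEnergy_self] at hsub
  refine ⟨p, hp, tendsto_iff_norm_sub_tendsto_zero.mpr ?_⟩
  refine squeeze_zero (fun _ ↦ norm_nonneg _) (fun k ↦ ?_) (by simpa using henergy.sqrt)
  exact Real.le_sqrt_of_sq_le (sq_norm_sub_le_descentEnergy hc (hp _))

end IsLineSearchDescent

end

theorem gradient_descent_line_search_dist_tendsto_zero_general
    {n : ℕ}
    (f : EuclideanSpace ℝ (Fin n) → ℝ)
    (f' : EuclideanSpace ℝ (Fin n) → EuclideanSpace ℝ (Fin n))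
    (hconv : ConvexOn ℝ Set.univ f)
    (hderiv : ∀ y, HasGradientAt f (f' y) y)
    (Ω : Set (EuclideanSpace ℝ (Fin n))) (hΩ : Ω = {z | ∀ y, f z ≤ f y})
    (hΩne : Ω.Nonempty)
    (γ C₁ C₂ : ℝ) (hγ0 : 0 < γ)
    (hC₂0 : 0 < C₂)
    (α : ℕ → ℝ) (hα : ∀ k, α k ∈ Set.Icc C₂ C₁)
    (x : ℕ → EuclideanSpace ℝ (Fin n))
    (hx : ∀ k, x (k + 1) = x k - α k • f' (x k))
    (hdec : ∀ k, f (x (k + 1)) ≤ f (x k) - γ * α k / 2 * ‖f' (x k)‖ ^ 2) :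
    Filter.Tendsto (fun k : ℕ => Metric.infDist (x k) Ω)
      Filter.atTop (nhds 0) := by
  obtain ⟨p, hp, hxp⟩ := IsLineSearchDescent.exists_tendsto_minimizer ⟨hα, hx, hdec⟩ hconv hderiv
    (by rw [hΩ] at hΩne; exact hΩne) hγ0 hC₂0
  have hpΩ : p ∈ Ω := hΩ ▸ hp
  have hlim := ((Metric.continuous_infDist_pt Ω).tendsto p).comp hxp
  rwa [Metric.infDist_zero_of_mem hpΩ] at hlim

/-- **Lemma 4 of the paper.** In Euclidean space `ℝⁿ`, line-search
gradient descent iterates satisfy `dist(x_k, Ω) → 0`. -/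
theorem gradient_descent_line_search_dist_tendsto_zero
    {n : ℕ}
    (f : EuclideanSpace ℝ (Fin n) → ℝ)
    (f' : EuclideanSpace ℝ (Fin n) → EuclideanSpace ℝ (Fin n))
    (L : ℝ) (hL : 0 < L)
    (hconv : ConvexOn ℝ Set.univ f)
    (hderiv : ∀ y, HasGradientAt f (f' y) y)
    (hlip : ∀ y z, ‖f' y - f' z‖ ≤ L * ‖y - z‖)
    (Ω : Set (EuclideanSpace ℝ (Fin n))) (hΩ : Ω = {z | ∀ y, f z ≤ f y})
    (hΩne : Ω.Nonempty)
    (γ C₁ C₂ : ℝ) (hγ0 : 0 < γ) (hγ1 : γ ≤ 1)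
    (hC₂0 : 0 < C₂) (hC₂L : C₂ ≤ (2 - γ) / L) (hC₁ : C₂ ≤ C₁)
    (α : ℕ → ℝ) (hα : ∀ k, α k ∈ Set.Icc C₂ C₁)
    (x : ℕ → EuclideanSpace ℝ (Fin n))
    (hx : ∀ k, x (k + 1) = x k - α k • f' (x k))
    (hdec : ∀ k, f (x (k + 1)) ≤ f (x k) - γ * α k / 2 * ‖f' (x k)‖ ^ 2) :
    Filter.Tendsto (fun k : ℕ => Metric.infDist (x k) Ω)
      Filter.atTop (nhds 0) :=
  gradient_descent_line_search_dist_tendsto_zero_general f f' hconv hderiv Ω hΩ hΩne γ C₁ C₂ hγ0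
    hC₂0 α hα x hx hdec
end

section
/- Let f : ℝⁿ → ℝ be convex and differentiable, with componentwise Lipschitz constants L₁,…,Lₙ > 0 and parameters L̄ᵢ ≥ Lᵢ, let p₁,…,pₙ be probabilities with pᵢ ≥ p_min > 0 and ∑pᵢ = 1, let x̄ be a minimizer of f with f* = f(x̄), and define r(x)² = ∑_{i=1}^n (L̄ᵢ/pᵢ)(xᵢ − x̄ᵢ)². Then for any x ∈ ℝⁿ, with x⁽ⁱ⁾ = x − (∇ᵢf(x)/L̄ᵢ) eᵢ for each i, the single-step averaged inequality holds: ∑_{i=1}^n pᵢ r(x⁽ⁱ⁾)² − r(x)² ≤ (2/p_min)( f(x) − ∑_{i=1}^n pᵢ f(x⁽ⁱ⁾) ) + 2( f* − f(x) ). -/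
/-!
Along coordinate `i` the function `t ↦ f (x + t • eᵢ)` has an `Lᵢ`-Lipschitz derivative, so the
step `x⁽ⁱ⁾` decreases `f` by at least `(∇ᵢf x)² / (2 L̄ᵢ)`. Expanding the weighted distance gives
`pᵢ (r(x⁽ⁱ⁾)² − r(x)²) = (∇ᵢf x)² / L̄ᵢ + 2 ∇ᵢf x (x̄ᵢ − xᵢ)`. The first term is at most twice the
decrease, hence at most `2 pᵢ / p_min` times it; after averaging, the second term becomes
`2 ⟪∇f x, x̄ − x⟫ ≤ 2 (f x̄ − f x)` by convexity.
-/

open Set Finset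
open scoped InnerProductSpace

theorem le_add_mul_add_sq_of_abs_deriv_sub_le_of_nonneg {φ φ' : ℝ → ℝ} {L : ℝ}
    (hφ : ∀ t, HasDerivAt φ (φ' t) t) (hlip : ∀ t, |φ' t - φ' 0| ≤ L * |t|) {T : ℝ}
    (hT : 0 ≤ T) : φ T ≤ φ 0 + φ' 0 * T + L / 2 * T ^ 2 := by
  set g : ℝ → ℝ := fun t ↦ φ 0 + φ' 0 * t + L / 2 * t ^ 2 - φ t
  have hg : ∀ t, HasDerivAt g (φ' 0 + L * t - φ' t) t := fun t ↦ by
    have := (((hasDerivAt_id t).const_mul (φ' 0)).const_add (φ 0)).add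
      ((hasDerivAt_pow 2 t).const_mul (L / 2)) |>.sub (hφ t)
    exact this.congr_deriv (by simp; ring)
  have hmono : MonotoneOn g (Ici 0) := by
    refine monotoneOn_of_hasDerivWithinAt_nonneg (convex_Ici 0)
      (fun t _ ↦ (hg t).continuousAt.continuousWithinAt) (fun t _ ↦ (hg t).hasDerivWithinAt)
      fun t ht ↦ ?_
    rw [interior_Ici] at ht
    have := (abs_le.mp (hlip t)).2
    rw [abs_of_pos ht] at this
    linarith
  have := hmono self_mem_Ici hT hT
  simp only [g] at this
  linarith

theorem le_add_mul_add_sq_of_abs_deriv_sub_le {φ φ' : ℝ → ℝ} {L : ℝ}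
    (hφ : ∀ t, HasDerivAt φ (φ' t) t) (hlip : ∀ t, |φ' t - φ' 0| ≤ L * |t|) (T : ℝ) :
    φ T ≤ φ 0 + φ' 0 * T + L / 2 * T ^ 2 := by
  rcases le_total 0 T with hT | hT
  · exact le_add_mul_add_sq_of_abs_deriv_sub_le_of_nonneg hφ hlip hT
  · have hψ : ∀ t, HasDerivAt (fun s ↦ φ (-s)) (-φ' (-t)) t := fun t ↦ by
      simpa [Function.comp_def] using (hφ (-t)).comp t (hasDerivAt_neg t)
    have hlipψ : ∀ t, |-φ' (-t) - -φ' (-0)| ≤ L * |t| := fun t ↦ by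
      rw [neg_zero, ← neg_sub', abs_neg, ← abs_neg t]
      exact hlip (-t)
    have := le_add_mul_add_sq_of_abs_deriv_sub_le_of_nonneg hψ hlipψ (neg_nonneg.mpr hT)
    simp only [neg_neg, neg_zero] at this
    linarith

theorem HasGradientAt.hasDerivAt_comp_add_smul {F : Type*} [NormedAddCommGroup F]
    [InnerProductSpace ℝ F] [CompleteSpace F] {f : F → ℝ} {g x v : F} {t : ℝ}
    (hf : HasGradientAt f g (x + t • v)) :
    HasDerivAt (fun s : ℝ ↦ f (x + s • v)) ⟪g, v⟫_ℝ t := by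
  have hline : HasDerivAt (fun s : ℝ ↦ x + s • v) v t := by
    simpa using ((hasDerivAt_id t).smul_const v).const_add x
  exact hf.hasFDerivAt.comp_hasDerivAt t hline

theorem ConvexOn.inner_gradient_le_sub {F : Type*} [NormedAddCommGroup F]
    [InnerProductSpace ℝ F] [CompleteSpace F] {s : Set F} {f : F → ℝ} {g x y : F}
    (hf : ConvexOn ℝ s f) (hx : x ∈ s) (hy : y ∈ s) (hg : HasGradientAt f g x) :
    ⟪g, y - x⟫_ℝ ≤ f y - f x := by
  have hline : f ∘ AffineMap.lineMap x y = fun t : ℝ ↦ f (x + t • (y - x)) := by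
    ext t; simp [AffineMap.lineMap_apply_module', add_comm]
  have hφ := hf.comp_affineMap (AffineMap.lineMap x y)
  rw [hline] at hφ
  have := hφ.le_slope_of_hasDerivAt (x := 0) (y := 1) (by simpa using hx) (by simpa using hy)
    zero_lt_one (HasGradientAt.hasDerivAt_comp_add_smul (by simpa using hg))
  simpa [slope_def_field] using this

section Coordinates

variable {ι : Type*} [Fintype ι] [DecidableEq ι]

theorem apply_coordinate_step_le {f : EuclideanSpace ℝ ι → ℝ}
    {f' : EuclideanSpace ℝ ι → EuclideanSpace ℝ ι} (hf : ∀ y, HasGradientAt f (f' y) y)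
    {x : EuclideanSpace ℝ ι} {i : ι} {L M : ℝ}
    (hlip : ∀ h : ℝ, |f' (x + h • EuclideanSpace.single i 1) i - f' x i| ≤ L * |h|)
    (hLM : L ≤ M) (hM : 0 < M) :
    f (x - (f' x i / M) • EuclideanSpace.single i 1) ≤ f x - f' x i ^ 2 / (2 * M) := by
  have hφ : ∀ t : ℝ, HasDerivAt (fun s ↦ f (x + s • EuclideanSpace.single i 1))
      (f' (x + t • EuclideanSpace.single i 1) i) t := fun t ↦ by
    simpa [EuclideanSpace.inner_single_right] using
      (hf (x + t • EuclideanSpace.single i 1)).hasDerivAt_comp_add_smul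
  have hquad := le_add_mul_add_sq_of_abs_deriv_sub_le hφ (by simpa using hlip) (-(f' x i / M))
  rw [neg_smul, ← sub_eq_add_neg] at hquad
  simp only [zero_smul, add_zero] at hquad
  calc _ ≤ _ := hquad
    _ ≤ f x + f' x i * -(f' x i / M) + M / 2 * (-(f' x i / M)) ^ 2 := by gcongr
    _ = f x - f' x i ^ 2 / (2 * M) := by field_simp; ring

theorem sum_mul_sq_sub_smul_single (w : ι → ℝ) (x b : EuclideanSpace ℝ ι) (i : ι) (a : ℝ) :
    ∑ j, w j * ((x - a • EuclideanSpace.single i 1 : EuclideanSpace ℝ ι) j - b j) ^ 2 =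
      ∑ j, w j * (x j - b j) ^ 2 + w i * (a ^ 2 - 2 * a * (x i - b i)) := by
  rw [← sub_eq_iff_eq_add', ← sum_sub_distrib]
  have hterm : ∀ j, w j * ((x - a • EuclideanSpace.single i 1 : EuclideanSpace ℝ ι) j - b j) ^ 2
      - w j * (x j - b j) ^ 2
        = if j = i then w i * (a ^ 2 - 2 * a * (x i - b i)) else 0 := fun j ↦ by
    by_cases hj : j = i
    · subst hj; simp; ring
    · simp [hj]
  simp only [hterm, sum_ite_eq', Finset.mem_univ, if_true]

end Coordinates

theorem coordinate_descent_one_step_bound_general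
    {n : ℕ}
    (f : EuclideanSpace ℝ (Fin n) → ℝ)
    (f' : EuclideanSpace ℝ (Fin n) → EuclideanSpace ℝ (Fin n))
    (hconv : ConvexOn ℝ Set.univ f)
    (hderiv : ∀ y, HasGradientAt f (f' y) y)
    (Li : Fin n → ℝ) (hLi : ∀ i, 0 < Li i)
    (hcoordlip : ∀ (y : EuclideanSpace ℝ (Fin n)) (i : Fin n) (h : ℝ),
      |f' (y + h • EuclideanSpace.single i 1) i - f' y i| ≤ Li i * |h|)
    (Lbar : Fin n → ℝ) (hLbar : ∀ i, Li i ≤ Lbar i)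
    (xbar : EuclideanSpace ℝ (Fin n))
    (p : Fin n → ℝ) (pmin : ℝ) (hpmin : 0 < pmin)
    (hp : ∀ i, pmin ≤ p i) (hpsum : ∑ i, p i = 1)
    (R : EuclideanSpace ℝ (Fin n) → ℝ)
    (hR : ∀ z, R z = ∑ i, Lbar i / p i * (z i - xbar i) ^ 2)
    (x : EuclideanSpace ℝ (Fin n))
    (xi : Fin n → EuclideanSpace ℝ (Fin n))
    (hxi : ∀ i, xi i = x - (f' x i / Lbar i) • EuclideanSpace.single i 1) :
    ∑ i, p i * R (xi i) - R x ≤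
      2 / pmin * (f x - ∑ i, p i * f (xi i)) + 2 * (f xbar - f x) := by
  have hLbar_pos i : 0 < Lbar i := (hLi i).trans_le (hLbar i)
  have hp_pos i : 0 < p i := hpmin.trans_le (hp i)
  have hdecrease i : f' x i ^ 2 / Lbar i ≤ 2 * (f x - f (xi i)) := by
    have := apply_coordinate_step_le hderiv (hcoordlip x i) (hLbar i) (hLbar_pos i)
    rw [← hxi] at this
    field_simp at this ⊢
    linarith
  have hR_step i :
      p i * (R (xi i) - R x) = f' x i ^ 2 / Lbar i + 2 * (f' x i * (xbar i - x i)) := by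
    have := (hp_pos i).ne'
    have := (hLbar_pos i).ne'
    rw [hR, hR, hxi, sum_mul_sq_sub_smul_single]
    field_simp
    ring
  have hstep i : p i * (R (xi i) - R x) ≤
      2 / pmin * (p i * (f x - f (xi i))) + 2 * (f' x i * (xbar i - x i)) := by
    have hΔ : 0 ≤ f x - f (xi i) := by
      linarith [hdecrease i, div_nonneg (sq_nonneg (f' x i)) (hLbar_pos i).le]
    have hweight : 2 ≤ 2 / pmin * p i := by
      rw [div_mul_eq_mul_div, le_div_iff₀ hpmin]
      linarith [hp i]
    rw [hR_step]
    linarith [hdecrease i, mul_le_mul_of_nonneg_right hweight hΔ]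
  have hgrad : ∑ i, f' x i * (xbar i - x i) ≤ f xbar - f x := by
    simpa [PiLp.inner_apply, mul_comm] using
      hconv.inner_gradient_le_sub (Set.mem_univ x) (Set.mem_univ xbar) (hderiv x)
  calc ∑ i, p i * R (xi i) - R x = ∑ i, p i * (R (xi i) - R x) := by
        simp only [mul_sub, sum_sub_distrib, ← sum_mul, hpsum, one_mul]
    _ ≤ ∑ i, (2 / pmin * (p i * (f x - f (xi i))) + 2 * (f' x i * (xbar i - x i))) :=
        sum_le_sum fun i _ ↦ hstep i
    _ = 2 / pmin * (f x - ∑ i, p i * f (xi i)) + 2 * ∑ i, f' x i * (xbar i - x i) := by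
        simp only [sum_add_distrib, ← mul_sum, mul_sub, sum_sub_distrib, ← sum_mul, hpsum, one_mul]
    _ ≤ 2 / pmin * (f x - ∑ i, p i * f (xi i)) + 2 * (f xbar - f x) := by linarith

/-- Single-step averaged inequality for stochastic coordinate
descent: with `r(x)² = ∑ᵢ (L̄ᵢ/pᵢ)(xᵢ − x̄ᵢ)²` and coordinate updates
`x⁽ⁱ⁾ = x − (∇ᵢf(x)/L̄ᵢ) eᵢ`, we have
`∑ᵢ pᵢ r(x⁽ⁱ⁾)² − r(x)² ≤ (2/p_min)(f(x) − ∑ᵢ pᵢ f(x⁽ⁱ⁾)) + 2(f* − f(x))`. -/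
theorem coordinate_descent_one_step_bound
    {n : ℕ}
    (f : EuclideanSpace ℝ (Fin n) → ℝ)
    (f' : EuclideanSpace ℝ (Fin n) → EuclideanSpace ℝ (Fin n))
    (hconv : ConvexOn ℝ Set.univ f)
    (hderiv : ∀ y, HasGradientAt f (f' y) y)
    (Li : Fin n → ℝ) (hLi : ∀ i, 0 < Li i)
    (hcoordlip : ∀ (y : EuclideanSpace ℝ (Fin n)) (i : Fin n) (h : ℝ),
      |f' (y + h • EuclideanSpace.single i 1) i - f' y i| ≤ Li i * |h|)
    (Lbar : Fin n → ℝ) (hLbar : ∀ i, Li i ≤ Lbar i)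
    (xbar : EuclideanSpace ℝ (Fin n)) (hxbar : ∀ y, f xbar ≤ f y)
    (p : Fin n → ℝ) (pmin : ℝ) (hpmin : 0 < pmin)
    (hp : ∀ i, pmin ≤ p i) (hpsum : ∑ i, p i = 1)
    (R : EuclideanSpace ℝ (Fin n) → ℝ)
    (hR : ∀ z, R z = ∑ i, Lbar i / p i * (z i - xbar i) ^ 2)
    (x : EuclideanSpace ℝ (Fin n))
    (xi : Fin n → EuclideanSpace ℝ (Fin n))
    (hxi : ∀ i, xi i = x - (f' x i / Lbar i) • EuclideanSpace.single i 1) :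
    ∑ i, p i * R (xi i) - R x ≤
      2 / pmin * (f x - ∑ i, p i * f (xi i)) + 2 * (f xbar - f x) :=
  coordinate_descent_one_step_bound_general f f' hconv hderiv Li hLi hcoordlip Lbar hLbar xbar p
    pmin hpmin hp hpsum R hR x xi hxi
end

section
/- Let E be a real inner product space, f : E → ℝ convex and differentiable with L-Lipschitz gradient (L > 0), and ψ : E → ℝ convex. Set F = f + ψ and assume the set Ω of minimizers of F is nonempty, with minimum value F*. Given L̄ ≥ L, define the proximal gradient iterates x_{k+1} = x_k + d_k, where d_k is the (unique) global minimizer over d ∈ E of ⟨∇f(x_k), d⟩ + (L̄/2)‖d‖² + ψ(x_k + d). Then k·(F(x_k) − F*) → 0 as k → ∞; that is, F(x_k) − F* = o(1/k). -/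
/-!
For every `z`, one proximal gradient step satisfies
`F(x_{k+1}) + (L̄/2)‖z - x_{k+1}‖² ≤ F(z) + (L̄/2)‖z - x_k‖²`: the model minimised by `d_k` is
`L̄`-strongly convex, `f` lies below its quadratic upper model by the descent lemma, and above its
tangent planes by convexity. Taking `z = x_k` shows that `F(x_k) - F*` is nonincreasing, and
taking `z = x*` and telescoping shows that it is summable. A nonnegative nonincreasing summable
sequence is `o(1/k)`.
-/

open scoped RealInnerProductSpace

open Filter Topology Finset

lemma summable_of_le_sub_succ_s11 {a b : ℕ → ℝ} (ha : ∀ n, 0 ≤ a n) (hb : ∀ n, 0 ≤ b n)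
    (hab : ∀ n, a n ≤ b n - b (n + 1)) : Summable a :=
  summable_of_sum_range_le ha fun n => calc
    ∑ i ∈ range n, a i ≤ ∑ i ∈ range n, (b i - b (i + 1)) := sum_le_sum fun i _ => hab i
    _ = b 0 - b n := sum_range_sub' b n
    _ ≤ b 0 := sub_le_self _ (hb n)

/-- Olivier's theorem. -/
lemma Antitone.tendsto_natCast_mul_of_summable {a : ℕ → ℝ} (ha : Antitone a)
    (h0 : ∀ n, 0 ≤ a n) (hsum : Summable a) :
    Tendsto (fun n : ℕ => (n : ℝ) * a n) atTop (𝓝 0) := by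
  set S : ℕ → ℝ := fun n => ∑ i ∈ range n, a i
  have hS : Tendsto S atTop (𝓝 (∑' i, a i)) := hsum.tendsto_sum_tsum_nat
  have hgap : Tendsto (fun n => 2 * (S n - S (n / 2))) atTop (𝓝 0) := by
    simpa using (hS.sub (hS.comp (Nat.tendsto_div_const_atTop two_ne_zero))).const_mul 2
  refine squeeze_zero (fun n => mul_nonneg n.cast_nonneg (h0 n)) (fun n => ?_) hgap
  -- the last `n - n / 2 ≥ n / 2` terms of `S n` are all at least `a n`
  have hcard : (n : ℝ) ≤ 2 * ((n - n / 2 : ℕ) : ℝ) := by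
    exact_mod_cast (by omega : n ≤ 2 * (n - n / 2))
  have hblock : ((n - n / 2 : ℕ) : ℝ) * a n ≤ S n - S (n / 2) := calc
    ((n - n / 2 : ℕ) : ℝ) * a n = #(Ico (n / 2) n) • a n := by rw [Nat.card_Ico, nsmul_eq_mul]
    _ ≤ ∑ i ∈ Ico (n / 2) n, a i := card_nsmul_le_sum _ _ _ fun i hi => ha (mem_Ico.1 hi).2.le
    _ = S n - S (n / 2) := sum_Ico_eq_sub a (Nat.div_le_self n 2)
  nlinarith [h0 n]

section StrongConvexity

variable {E : Type*} [NormedAddCommGroup E]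

lemma StrongConvexOn.add_sq_norm_sub_le_of_isMinOn [NormedSpace ℝ E] {s : Set E} {m : ℝ}
    {h : E → ℝ} (hh : StrongConvexOn s m h) {d z : E} (hd : d ∈ s) (hz : z ∈ s)
    (hmin : IsMinOn h s d) : h d + m / 2 * ‖z - d‖ ^ 2 ≤ h z := by
  have hsegment : ∀ t ∈ Set.Ioo (0 : ℝ) 1, h d + (1 - t) * (m / 2 * ‖z - d‖ ^ 2) ≤ h z := by
    rintro t ⟨ht0, ht1⟩
    have hconv := hh.2 hd hz (sub_nonneg.2 ht1.le) ht0.le (sub_add_cancel 1 t)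
    have hle : h d ≤ h ((1 - t) • d + t • z) :=
      hmin (hh.1 hd hz (sub_nonneg.2 ht1.le) ht0.le (sub_add_cancel 1 t))
    simp only [smul_eq_mul, norm_sub_rev d z] at hconv
    refine le_of_mul_le_mul_left ?_ ht0
    linarith
  have hlim : Tendsto (fun t : ℝ => h d + (1 - t) * (m / 2 * ‖z - d‖ ^ 2)) (𝓝[>] 0)
      (𝓝 (h d + m / 2 * ‖z - d‖ ^ 2)) := by
    have hcont : Continuous fun t : ℝ => h d + (1 - t) * (m / 2 * ‖z - d‖ ^ 2) := by fun_prop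
    simpa using (hcont.tendsto 0).mono_left nhdsWithin_le_nhds
  exact le_of_tendsto hlim (eventually_of_mem (Ioo_mem_nhdsGT one_pos) hsegment)

variable [InnerProductSpace ℝ E]

lemma strongConvexOn_inner_add_sq_norm_add {ψ : E → ℝ} (hψ : ConvexOn ℝ Set.univ ψ)
    (g x : E) (c : ℝ) :
    StrongConvexOn Set.univ c fun w => ⟪g, w⟫ + c / 2 * ‖w‖ ^ 2 + ψ (x + w) := by
  rw [strongConvexOn_iff_convex]
  have hlin := (innerₛₗ ℝ g).convexOn (convex_univ (𝕜 := ℝ))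
  have htrans : ConvexOn ℝ Set.univ fun w => ψ (x + w) := by
    simpa [Function.comp_def] using hψ.translate_right x
  refine (hlin.add htrans).congr fun w _ => ?_
  simp only [Pi.add_apply, innerₛₗ_apply_apply]
  ring

end StrongConvexity

section Smooth

variable {E : Type*} [NormedAddCommGroup E] [InnerProductSpace ℝ E] {f : E → ℝ} {f' : E → E}

lemma hasDerivAt_apply_add_smul (hderiv : ∀ y, HasFDerivAt f (innerSL ℝ (f' y)) y)
    (x v : E) (t : ℝ) :
    HasDerivAt (fun s : ℝ => f (x + s • v)) ⟪f' (x + t • v), v⟫ t := by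
  have hline : HasDerivAt (fun s : ℝ => x + s • v) v t := by
    simpa using ((hasDerivAt_id t).smul_const v).const_add x
  simpa [Function.comp_def] using (hderiv (x + t • v)).comp_hasDerivAt t hline

lemma ConvexOn.add_inner_sub_le (hf : ConvexOn ℝ Set.univ f)
    (hderiv : ∀ y, HasFDerivAt f (innerSL ℝ (f' y)) y) (x y : E) :
    f x + ⟪f' x, y - x⟫ ≤ f y := by
  have hline : ConvexOn ℝ Set.univ fun t : ℝ => f (x + t • (y - x)) := by
    simpa [Function.comp_def] using
      (hf.translate_right x).comp_linearMap (LinearMap.toSpanSingleton ℝ E (y - x))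
  have hslope := hline.le_slope_of_hasDerivAt (Set.mem_univ 0) (Set.mem_univ 1) one_pos
    (by simpa using hasDerivAt_apply_add_smul hderiv x (y - x) 0)
  simp only [slope_def_field, one_smul, zero_smul, add_zero, add_sub_cancel] at hslope
  linarith

lemma apply_add_le_of_lipschitz_gradient {L : ℝ}
    (hderiv : ∀ y, HasFDerivAt f (innerSL ℝ (f' y)) y)
    (hlip : ∀ y z, ‖f' y - f' z‖ ≤ L * ‖y - z‖) (x v : E) :
    f (x + v) ≤ f x + ⟪f' x, v⟫ + L / 2 * ‖v‖ ^ 2 := by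
  set g : ℝ → ℝ := fun t => f (x + t • v) - t * ⟪f' x, v⟫ - L / 2 * ‖v‖ ^ 2 * t ^ 2
  have hg : ∀ t, HasDerivAt g (⟪f' (x + t • v) - f' x, v⟫ - L * ‖v‖ ^ 2 * t) t := fun t => by
    have := ((hasDerivAt_apply_add_smul hderiv x v t).sub (hasDerivAt_mul_const ⟪f' x, v⟫)).sub
      ((hasDerivAt_pow 2 t).const_mul (L / 2 * ‖v‖ ^ 2))
    refine this.congr_deriv ?_
    simp only [inner_sub_left, Nat.cast_ofNat]
    ring
  have hg_nonpos : ∀ t ∈ interior (Set.Icc (0 : ℝ) 1),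
      ⟪f' (x + t • v) - f' x, v⟫ - L * ‖v‖ ^ 2 * t ≤ 0 := by
    intro t ht
    rw [interior_Icc] at ht
    have := calc ⟪f' (x + t • v) - f' x, v⟫ ≤ ‖f' (x + t • v) - f' x‖ * ‖v‖ :=
          real_inner_le_norm _ _
      _ ≤ L * ‖t • v‖ * ‖v‖ := by
          gcongr
          simpa using hlip (x + t • v) x
      _ = L * ‖v‖ ^ 2 * t := by
          rw [norm_smul, Real.norm_of_nonneg ht.1.le]
          ring
    linarith
  have hanti : AntitoneOn g (Set.Icc 0 1) :=
    antitoneOn_of_hasDerivWithinAt_nonpos (convex_Icc 0 1)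
      (fun t _ => (hg t).continuousAt.continuousWithinAt)
      (fun t _ => (hg t).hasDerivWithinAt) hg_nonpos
  have := hanti (Set.left_mem_Icc.2 zero_le_one) (Set.right_mem_Icc.2 zero_le_one) zero_le_one
  simp only [g, zero_smul, one_smul, add_zero] at this
  linarith

end Smooth

lemma proxGrad_step_le {E : Type*} [NormedAddCommGroup E] [InnerProductSpace ℝ E]
    {f : E → ℝ} {f' : E → E} {ψ : E → ℝ} {L Lbar : ℝ}
    (hf : ConvexOn ℝ Set.univ f) (hderiv : ∀ y, HasFDerivAt f (innerSL ℝ (f' y)) y)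
    (hlip : ∀ y z, ‖f' y - f' z‖ ≤ L * ‖y - z‖) (hψ : ConvexOn ℝ Set.univ ψ) (hLbar : L ≤ Lbar)
    {x d : E} (hd : ∀ z : E, ⟪f' x, d⟫ + Lbar / 2 * ‖d‖ ^ 2 + ψ (x + d) ≤
        ⟪f' x, z⟫ + Lbar / 2 * ‖z‖ ^ 2 + ψ (x + z)) (z : E) :
    f (x + d) + ψ (x + d) + Lbar / 2 * ‖z - (x + d)‖ ^ 2 ≤
      f z + ψ z + Lbar / 2 * ‖z - x‖ ^ 2 := by
  have hmodel :=
    (strongConvexOn_inner_add_sq_norm_add hψ (f' x) x Lbar).add_sq_norm_sub_le_of_isMinOn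
      (Set.mem_univ d) (Set.mem_univ (z - x)) fun w _ => hd w
  have hdescent := apply_add_le_of_lipschitz_gradient hderiv hlip x d
  have hlower := hf.add_inner_sub_le hderiv x z
  have hLd : L / 2 * ‖d‖ ^ 2 ≤ Lbar / 2 * ‖d‖ ^ 2 := by gcongr
  simp only [add_sub_cancel, sub_sub] at hmodel
  linarith

/-- **Theorem 4 of the paper.** The proximal gradient method with
parameter `L̄ ≥ L` on `F = f + ψ` (with `f` convex `L`-smooth and `ψ` convex)
satisfies `F(x_k) − F* = o(1/k)`. -/
theorem proximal_gradient_o_one_div_k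
    {E : Type*} [NormedAddCommGroup E] [InnerProductSpace ℝ E]
    (f : E → ℝ) (f' : E → E) (ψ : E → ℝ) (L : ℝ) (hL : 0 < L)
    (hfconv : ConvexOn ℝ Set.univ f)
    (hderiv : ∀ y, HasFDerivAt f (innerSL ℝ (f' y)) y)
    (hlip : ∀ y z, ‖f' y - f' z‖ ≤ L * ‖y - z‖)
    (hψconv : ConvexOn ℝ Set.univ ψ)
    (F : E → ℝ) (hF : ∀ y, F y = f y + ψ y)
    (xstar : E) (hxstar : ∀ y, F xstar ≤ F y)
    (Lbar : ℝ) (hLbar : L ≤ Lbar)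
    (x : ℕ → E) (d : ℕ → E)
    (hd : ∀ k, ∀ z : E,
      ⟪f' (x k), d k⟫ + Lbar / 2 * ‖d k‖ ^ 2 + ψ (x k + d k) ≤
        ⟪f' (x k), z⟫ + Lbar / 2 * ‖z‖ ^ 2 + ψ (x k + z))
    (hx : ∀ k, x (k + 1) = x k + d k) :
    Filter.Tendsto (fun k : ℕ => (k : ℝ) * (F (x k) - F xstar))
      Filter.atTop (nhds 0) := by
  have hLbar_nonneg : 0 ≤ Lbar := hL.le.trans hLbar
  have hstep : ∀ k z, F (x (k + 1)) + Lbar / 2 * ‖z - x (k + 1)‖ ^ 2 ≤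
      F z + Lbar / 2 * ‖z - x k‖ ^ 2 := fun k z => by
    simpa only [← hF, ← hx k] using
      proxGrad_step_le hfconv hderiv hlip hψconv hLbar (hd k) z
  have hgap_nonneg : ∀ k, 0 ≤ F (x k) - F xstar := fun k => sub_nonneg.2 (hxstar _)
  have hgap_anti : Antitone fun k => F (x k) - F xstar := antitone_nat_of_succ_le fun k => by
    have := hstep k (x k)
    have hdist : 0 ≤ Lbar / 2 * ‖x k - x (k + 1)‖ ^ 2 := by positivity
    rw [sub_self, norm_zero] at this
    linarith
  have hgap_summable : Summable fun k => F (x k) - F xstar :=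
    (summable_nat_add_iff 1).1 <|
      summable_of_le_sub_succ_s11 (b := fun k => Lbar / 2 * ‖xstar - x k‖ ^ 2)
        (fun k => hgap_nonneg (k + 1)) (fun k => by positivity) fun k => by linarith [hstep k xstar]
  exact hgap_anti.tendsto_natCast_mul_of_summable hgap_nonneg hgap_summable
end

section
/- Let E be a real inner product space, ψ : E → ℝ a convex function, a > 0 a real number, and b, x ∈ E. If d is a global minimizer over E of the function h(d) = ⟨b, d⟩ + (a/2)‖d‖² + ψ(x + d), then ⟨b, d⟩ + (a/2)‖d‖² + ψ(x + d) − ψ(x) ≤ −(a/2)‖d‖². -/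
open scoped RealInnerProductSpace
open Topology Filter

/-- **Lemma 5 of the paper.** If `d` minimizes
`h(d) = ⟨b, d⟩ + (a/2)‖d‖² + ψ(x + d)` over a real inner product space, with `ψ`
convex and `a > 0`, then `⟨b, d⟩ + (a/2)‖d‖² + ψ(x + d) − ψ(x) ≤ −(a/2)‖d‖²`. -/
theorem prox_subproblem_sufficient_decrease
    {E : Type*} [NormedAddCommGroup E] [InnerProductSpace ℝ E]
    (ψ : E → ℝ) (hψconv : ConvexOn ℝ Set.univ ψ)
    (a : ℝ) (ha : 0 < a) (b x d : E)
    (hd : ∀ z : E,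
      ⟪b, d⟫ + a / 2 * ‖d‖ ^ 2 + ψ (x + d) ≤
        ⟪b, z⟫ + a / 2 * ‖z‖ ^ 2 + ψ (x + z)) :
    ⟪b, d⟫ + a / 2 * ‖d‖ ^ 2 + ψ (x + d) - ψ x ≤ -(a / 2) * ‖d‖ ^ 2 := by
  have key : ∀ t ∈ Set.Ioo (0:ℝ) 1,
      ⟪b, d⟫ + ψ (x + d) - ψ x ≤ -(a / 2) * (1 + t) * ‖d‖ ^ 2 := by
    intro t ht
    obtain ⟨ht0, ht1⟩ := ht
    have h1 := hd (t • d)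
    have hin : ⟪b, t • d⟫ = t * ⟪b, d⟫ := real_inner_smul_right b d t
    have hnorm : ‖t • d‖ ^ 2 = t ^ 2 * ‖d‖ ^ 2 := by
      rw [norm_smul]
      simp [abs_of_pos ht0, mul_pow]
    have hconv : ψ (x + t • d) ≤ (1 - t) * ψ x + t * ψ (x + d) := by
      have := hψconv.2 (Set.mem_univ x) (Set.mem_univ (x + d))
        (by linarith : (0:ℝ) ≤ 1 - t) (le_of_lt ht0) (by ring)
      have heq : (1 - t) • x + t • (x + d) = x + t • d := by
        rw [smul_add]; module
      rw [heq] at this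
      simpa using this
    rw [hin, hnorm] at h1
    nlinarith [sq_nonneg (‖d‖ : ℝ), mul_pos ht0 (sub_pos.mpr ht1)]
  have hlim : ⟪b, d⟫ + ψ (x + d) - ψ x ≤ -a * ‖d‖ ^ 2 := by
    have hne : (𝓝[Set.Ioo (0:ℝ) 1] 1).NeBot := by
      exact right_nhdsWithin_Ioo_neBot (by norm_num)
    have htend : Filter.Tendsto (fun t : ℝ => -(a / 2) * (1 + t) * ‖d‖ ^ 2)
        (𝓝[Set.Ioo (0:ℝ) 1] 1) (𝓝 (-a * ‖d‖ ^ 2)) := by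
      have : Filter.Tendsto (fun t : ℝ => -(a / 2) * (1 + t) * ‖d‖ ^ 2)
          (𝓝 1) (𝓝 (-(a / 2) * (1 + 1) * ‖d‖ ^ 2)) := by
        exact (Continuous.tendsto (by continuity) 1)
      have h2 : -(a / 2) * (1 + 1) * ‖d‖ ^ 2 = -a * ‖d‖ ^ 2 := by ring
      rw [h2] at this
      exact this.mono_left nhdsWithin_le_nhds
    exact ge_of_tendsto htend (Filter.eventually_mem_set.mpr self_mem_nhdsWithin |>.mono key)
  linarith
end

section
/- Let E be a real inner product space, f : E → ℝ convex and differentiable with L-Lipschitz gradient (L > 0), ψ : E → ℝ convex, F = f + ψ, and x̄ a minimizer of F with F* = F(x̄). Let γ ∈ (0,1] and α ∈ [C₂, C₁] with C₁ ≥ C₂ > 0. Fix x ∈ E, let d minimize d ↦ ⟨∇f(x), d⟩ + (1/(2α))‖d‖² + ψ(x + d) over E, set x⁺ = x + d, and assume F(x⁺) ≤ F(x) − (γ/(2α))‖d‖². Then ‖x⁺ − x̄‖² − ‖x − x̄‖² ≤ 2C₂ (F* − F(x⁺)) + (2LC₁²/γ)(F(x) − F(x⁺)). -/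
open scoped RealInnerProductSpace
open Set Filter Topology

/-!
Let `x⁺ = x + d`. Minimality of `d` for the strongly convex model gives the variational inequality
`⟪∇f(x), d⟫ + ψ(x⁺) ≤ ⟪∇f(x), z - x⟫ + ψ(z) + α⁻¹⟪d, z - x⁺⟫` for every `z`. Bounding the linear
terms by the gradient inequality of the convex `f` and by the descent lemma of the `L`-smooth `f`
turns it into `‖x⁺ - z‖² - ‖x - z‖² ≤ 2α (F z - F x⁺) + (αL - 1)‖d‖²`. At `z = x̄` the first term
is nonpositive, so `α` may be lowered to `C₂`, and sufficient decrease gives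
`‖d‖² ≤ (2α/γ)(F x - F x⁺)`, after which `α` is raised to `C₁`.
-/

section NormedSpace

variable {E : Type*} [NormedAddCommGroup E] [NormedSpace ℝ E]

theorem ConvexOn.le_sub_of_hasFDerivAt {f : E → ℝ} {s : Set E} {φ : E →L[ℝ] ℝ} {a b : E}
    (hf : ConvexOn ℝ s f) (ha : a ∈ s) (hb : b ∈ s) (hφ : HasFDerivAt f φ a) :
    φ (b - a) ≤ f b - f a := by
  have hline : ConvexOn ℝ (AffineMap.lineMap a b ⁻¹' s) (f ∘ AffineMap.lineMap (k := ℝ) a b) :=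
    hf.comp_affineMap _
  have hderiv : HasDerivAt (f ∘ AffineMap.lineMap (k := ℝ) a b) (φ (b - a)) 0 :=
    (by simpa using hφ : HasFDerivAt f φ (AffineMap.lineMap a b (0 : ℝ))).comp_hasDerivAt 0
      AffineMap.hasDerivAt_lineMap
  simpa [slope_def_field] using
    hline.le_slope_of_hasDerivAt (by simpa using ha) (by simpa using hb) one_pos hderiv

theorem image_add_le_of_lipschitz_fderiv {f : E → ℝ} {D : E → E →L[ℝ] ℝ} {L : ℝ}
    (hD : ∀ y, HasFDerivAt f (D y) y) (hL : ∀ y z, ‖D y - D z‖ ≤ L * ‖y - z‖) (x d : E) :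
    f (x + d) ≤ f x + D x d + L / 2 * ‖d‖ ^ 2 := by
  set g : ℝ → ℝ := fun t => f (x + t • d) - t * D x d - L / 2 * ‖d‖ ^ 2 * t ^ 2
  have hg : ∀ t, HasDerivAt g (D (x + t • d) d - D x d - L * ‖d‖ ^ 2 * t) t := by
    intro t
    have hline : HasDerivAt (fun s : ℝ => x + s • d) d t := by
      simpa using ((hasDerivAt_id t).smul_const d).const_add x
    have hquad := (hasDerivAt_pow 2 t).const_mul (L / 2 * ‖d‖ ^ 2)
    exact ((((hD _).comp_hasDerivAt t hline).sub (hasDerivAt_mul_const (D x d))).sub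
      hquad).congr_deriv (by push_cast; ring)
  have hslope : ∀ t ∈ interior (Ici (0 : ℝ)), D (x + t • d) d - D x d - L * ‖d‖ ^ 2 * t ≤ 0 := by
    intro t ht
    rw [interior_Ici, mem_Ioi] at ht
    have hlip : ‖D (x + t • d) - D x‖ ≤ L * (t * ‖d‖) := by
      simpa [norm_smul, abs_of_pos ht] using hL (x + t • d) x
    rw [sub_nonpos]
    calc D (x + t • d) d - D x d = (D (x + t • d) - D x) d := by simp
      _ ≤ ‖D (x + t • d) - D x‖ * ‖d‖ := (le_abs_self _).trans ((D (x + t • d) - D x).le_opNorm d)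
      _ ≤ L * (t * ‖d‖) * ‖d‖ := by gcongr
      _ = L * ‖d‖ ^ 2 * t := by ring
  have hanti : AntitoneOn g (Ici 0) :=
    antitoneOn_of_hasDerivWithinAt_nonpos (convex_Ici 0)
      (fun t _ => (hg t).continuousAt.continuousWithinAt) (fun t _ => (hg t).hasDerivWithinAt)
      hslope
  have hg01 := hanti (mem_Ici.2 le_rfl) (mem_Ici.2 zero_le_one) zero_le_one
  norm_num [g] at hg01
  linarith

end NormedSpace

section InnerProductSpace

variable {E : Type*} [NormedAddCommGroup E] [InnerProductSpace ℝ E]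

theorem ConvexOn.le_add_inner_of_isMinOn_add_norm_sq {h : E → ℝ} {c : ℝ} {d : E}
    (hh : ConvexOn ℝ univ h) (hd : IsMinOn (fun z => h z + c * ‖z‖ ^ 2) univ d) (u : E) :
    h d ≤ h u + 2 * c * ⟪d, u - d⟫ := by
  -- compare `d` with `d + t • (u - d)`, divide by `t` and let `t → 0`
  have hsegment : ∀ t ∈ Ioc (0 : ℝ) 1,
      h d ≤ h u + 2 * c * ⟪d, u - d⟫ + t * (c * ‖u - d‖ ^ 2) := by
    rintro t ⟨ht0, ht1⟩
    have hmin := isMinOn_univ_iff.1 hd (d + t • (u - d))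
    have hconv : h (d + t • (u - d)) ≤ (1 - t) * h d + t * h u := by
      rw [show d + t • (u - d) = (1 - t) • d + t • u by module]
      exact hh.2 (mem_univ d) (mem_univ u) (sub_nonneg.2 ht1) ht0.le (by ring)
    have hnorm : ‖d + t • (u - d)‖ ^ 2 = ‖d‖ ^ 2 + 2 * t * ⟪d, u - d⟫ + t ^ 2 * ‖u - d‖ ^ 2 := by
      rw [norm_add_sq_real, real_inner_smul_right, norm_smul, mul_pow, Real.norm_eq_abs, sq_abs]
      ring
    refine le_of_mul_le_mul_left ?_ ht0
    simp only [hnorm] at hmin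
    linarith
  have hlim : Tendsto (fun t : ℝ => h u + 2 * c * ⟪d, u - d⟫ + t * (c * ‖u - d‖ ^ 2)) (𝓝[>] 0)
      (𝓝 (h u + 2 * c * ⟪d, u - d⟫)) := by
    have hcont : Continuous fun t : ℝ => h u + 2 * c * ⟪d, u - d⟫ + t * (c * ‖u - d‖ ^ 2) := by
      fun_prop
    simpa using (hcont.tendsto 0).mono_left nhdsWithin_le_nhds
  exact ge_of_tendsto hlim (mem_of_superset (Ioc_mem_nhdsGT one_pos) hsegment)

theorem sq_dist_sub_le_of_proxGrad_step {f ψ : E → ℝ} {f' : E → E} {L α : ℝ}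
    (hfconv : ConvexOn ℝ univ f) (hderiv : ∀ y, HasFDerivAt f (innerSL ℝ (f' y)) y)
    (hlip : ∀ y z, ‖f' y - f' z‖ ≤ L * ‖y - z‖) (hψconv : ConvexOn ℝ univ ψ) (hα : 0 < α)
    {x d : E}
    (hd : ∀ z : E,
      ⟪f' x, d⟫ + 1 / (2 * α) * ‖d‖ ^ 2 + ψ (x + d) ≤
        ⟪f' x, z⟫ + 1 / (2 * α) * ‖z‖ ^ 2 + ψ (x + z))
    (z : E) :
    ‖x + d - z‖ ^ 2 - ‖x - z‖ ^ 2 ≤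
      2 * α * (f z + ψ z - (f (x + d) + ψ (x + d))) + (α * L - 1) * ‖d‖ ^ 2 := by
  have hmodel : ConvexOn ℝ univ fun w => ⟪f' x, w⟫ + ψ (x + w) :=
    ((innerSL ℝ (f' x)).toLinearMap.convexOn convex_univ).add (hψconv.translate_right x)
  have hprox := hmodel.le_add_inner_of_isMinOn_add_norm_sq (c := 1 / (2 * α))
    (isMinOn_univ_iff.2 fun w => by simpa only [add_right_comm] using hd w) (z - x)
  have hgrad := hfconv.le_sub_of_hasFDerivAt (mem_univ x) (mem_univ z) (hderiv x)
  have hdescent := image_add_le_of_lipschitz_fderiv hderiv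
    (fun y w => by rw [← map_sub, innerSL_apply_norm]; exact hlip y w) x d
  have hdist : ‖x + d - z‖ ^ 2 - ‖x - z‖ ^ 2 = -2 * ⟪d, z - x - d⟫ - ‖d‖ ^ 2 := by
    rw [← real_inner_self_eq_norm_sq, ← real_inner_self_eq_norm_sq, ← real_inner_self_eq_norm_sq]
    simp only [inner_sub_left, inner_sub_right, inner_add_left, inner_add_right, real_inner_comm]
    ring
  rw [innerSL_apply_apply] at hgrad hdescent
  rw [add_sub_cancel] at hprox
  field_simp at hprox
  rw [hdist]
  linarith [mul_le_mul_of_nonneg_left hgrad hα.le, mul_le_mul_of_nonneg_left hdescent hα.le]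

end InnerProductSpace

theorem proximal_gradient_line_search_one_step_bound_general
    {E : Type*} [NormedAddCommGroup E] [InnerProductSpace ℝ E]
    (f : E → ℝ) (f' : E → E) (ψ : E → ℝ) (L : ℝ) (hL : 0 < L)
    (hfconv : ConvexOn ℝ Set.univ f)
    (hderiv : ∀ y, HasFDerivAt f (innerSL ℝ (f' y)) y)
    (hlip : ∀ y z, ‖f' y - f' z‖ ≤ L * ‖y - z‖)
    (hψconv : ConvexOn ℝ Set.univ ψ)
    (F : E → ℝ) (hF : ∀ y, F y = f y + ψ y)
    (xbar : E) (hxbar : ∀ y, F xbar ≤ F y)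
    (γ C₁ C₂ : ℝ) (hγ0 : 0 < γ) (hC₂0 : 0 < C₂)
    (α : ℝ) (hα : α ∈ Set.Icc C₂ C₁)
    (x d : E)
    (hd : ∀ z : E,
      ⟪f' x, d⟫ + 1 / (2 * α) * ‖d‖ ^ 2 + ψ (x + d) ≤
        ⟪f' x, z⟫ + 1 / (2 * α) * ‖z‖ ^ 2 + ψ (x + z))
    (hdec : F (x + d) ≤ F x - γ / (2 * α) * ‖d‖ ^ 2) :
    ‖x + d - xbar‖ ^ 2 - ‖x - xbar‖ ^ 2 ≤
      2 * C₂ * (F xbar - F (x + d)) + 2 * L * C₁ ^ 2 / γ * (F x - F (x + d)) := by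
  obtain ⟨hC₂α, hαC₁⟩ := hα
  have hα : 0 < α := hC₂0.trans_le hC₂α
  have hstep := sq_dist_sub_le_of_proxGrad_step hfconv hderiv hlip hψconv hα hd xbar
  rw [← hF, ← hF] at hstep
  have hgap : F xbar - F (x + d) ≤ 0 := sub_nonpos.2 (hxbar (x + d))
  have hdecrease : γ / (2 * α) * ‖d‖ ^ 2 ≤ F x - F (x + d) := by linarith
  have hprogress : 0 ≤ F x - F (x + d) :=
    (by positivity : 0 ≤ γ / (2 * α) * ‖d‖ ^ 2).trans hdecrease
  have hd_sq : ‖d‖ ^ 2 ≤ 2 * α / γ * (F x - F (x + d)) :=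
    calc ‖d‖ ^ 2 = 2 * α / γ * (γ / (2 * α) * ‖d‖ ^ 2) := by field_simp
      _ ≤ 2 * α / γ * (F x - F (x + d)) := by gcongr
  calc ‖x + d - xbar‖ ^ 2 - ‖x - xbar‖ ^ 2
      ≤ 2 * α * (F xbar - F (x + d)) + α * L * ‖d‖ ^ 2 := by linarith [sq_nonneg ‖d‖]
    _ ≤ 2 * C₂ * (F xbar - F (x + d)) + α * L * (2 * α / γ * (F x - F (x + d))) :=
        add_le_add (mul_le_mul_of_nonpos_right (by linarith) hgap) (by gcongr)
    _ = 2 * C₂ * (F xbar - F (x + d)) + 2 * L * α ^ 2 / γ * (F x - F (x + d)) := by ring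
    _ ≤ 2 * C₂ * (F xbar - F (x + d)) + 2 * L * C₁ ^ 2 / γ * (F x - F (x + d)) := by
        gcongr

/-- A single line-search proximal gradient step with step
`α ∈ [C₂, C₁]` and sufficient decrease `F(x⁺) ≤ F(x) − (γ/(2α))‖d‖²` satisfies
`‖x⁺ − x̄‖² − ‖x − x̄‖² ≤ 2C₂(F* − F(x⁺)) + (2LC₁²/γ)(F(x) − F(x⁺))`. -/
theorem proximal_gradient_line_search_one_step_bound
    {E : Type*} [NormedAddCommGroup E] [InnerProductSpace ℝ E]
    (f : E → ℝ) (f' : E → E) (ψ : E → ℝ) (L : ℝ) (hL : 0 < L)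
    (hfconv : ConvexOn ℝ Set.univ f)
    (hderiv : ∀ y, HasFDerivAt f (innerSL ℝ (f' y)) y)
    (hlip : ∀ y z, ‖f' y - f' z‖ ≤ L * ‖y - z‖)
    (hψconv : ConvexOn ℝ Set.univ ψ)
    (F : E → ℝ) (hF : ∀ y, F y = f y + ψ y)
    (xbar : E) (hxbar : ∀ y, F xbar ≤ F y)
    (γ C₁ C₂ : ℝ) (hγ0 : 0 < γ) (hγ1 : γ ≤ 1) (hC₂0 : 0 < C₂) (hC₁ : C₂ ≤ C₁)
    (α : ℝ) (hα : α ∈ Set.Icc C₂ C₁)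
    (x d : E)
    (hd : ∀ z : E,
      ⟪f' x, d⟫ + 1 / (2 * α) * ‖d‖ ^ 2 + ψ (x + d) ≤
        ⟪f' x, z⟫ + 1 / (2 * α) * ‖z‖ ^ 2 + ψ (x + z))
    (hdec : F (x + d) ≤ F x - γ / (2 * α) * ‖d‖ ^ 2) :
    ‖x + d - xbar‖ ^ 2 - ‖x - xbar‖ ^ 2 ≤
      2 * C₂ * (F xbar - F (x + d)) + 2 * L * C₁ ^ 2 / γ * (F x - F (x + d)) :=
  proximal_gradient_line_search_one_step_bound_general f f' ψ L hL hfconv hderiv hlip hψconv F hF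
    xbar hxbar γ C₁ C₂ hγ0 hC₂0 α hα x d hd hdec
end

section
/- Let f : ℝⁿ → ℝ be convex and differentiable with componentwise Lipschitz constants L₁,…,Lₙ > 0, ψ(x) = ∑_{i=1}^n ψᵢ(xᵢ) with each ψᵢ : ℝ → ℝ convex, F = f + ψ, x̄ a minimizer of F with F* = F(x̄), L̄ᵢ ≥ Lᵢ, and probabilities pᵢ ≥ p_min > 0 with ∑pᵢ = 1; set r(x)² = ∑ᵢ (L̄ᵢ/pᵢ)(xᵢ − x̄ᵢ)². For x ∈ ℝⁿ, let dᵢ minimize d ↦ ∇ᵢf(x)·d + (L̄ᵢ/2)d² + ψᵢ(xᵢ + d) for each i, and set x⁽ⁱ⁾ = x + dᵢ eᵢ. Then ∑_{i=1}^n pᵢ r(x⁽ⁱ⁾)² − r(x)² ≤ 2(F* − F(x)) + (2/p_min)( F(x) − ∑_{i=1}^n pᵢ F(x⁽ⁱ⁾) ). -/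
/-!
Each coordinate step is a proximal step on the one-dimensional model
`t ↦ ∇ᵢf(x) t + (L̄ᵢ/2) t² + ψᵢ(xᵢ + t)`. Write `Δᵢ ≤ 0` for the decrease of this model at `dᵢ`.
The descent lemma along `eᵢ` (with `Lᵢ ≤ L̄ᵢ`) gives `F(x⁽ⁱ⁾) ≤ F(x) + Δᵢ`. The model is
`L̄ᵢ`-strongly convex, so at its minimizer it grows quadratically; evaluated at `x̄ᵢ − xᵢ` this
bounds `pᵢ (r(x⁽ⁱ⁾)² − r(x)²)` by `2 (∇ᵢf(x)(x̄ᵢ − xᵢ) + ψᵢ(x̄ᵢ) − ψᵢ(xᵢ)) − 2Δᵢ`. Summing over `i`,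
the gradient inequality for the convex `f` bounds the first part by `2 (F(x̄) − F(x))`, and
`−∑ Δᵢ ≤ p_min⁻¹ ∑ pᵢ (F(x) − F(x⁽ⁱ⁾))` because every `−Δᵢ` is nonnegative.
-/

open Set Filter Topology Finset

theorem apply_le_apply_zero_of_hasDerivAt {g g' : ℝ → ℝ} (hg : ∀ s, HasDerivAt g (g' s) s)
    (hpos : ∀ s, 0 < s → g' s ≤ 0) (hneg : ∀ s, s < 0 → 0 ≤ g' s) (t : ℝ) : g t ≤ g 0 := by
  have hcont : ContinuousOn g univ := fun s _ => (hg s).continuousAt.continuousWithinAt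
  rcases le_total 0 t with ht | ht
  · refine antitoneOn_of_hasDerivWithinAt_nonpos (convex_Ici 0) (hcont.mono (subset_univ _))
      (fun s _ => (hg s).hasDerivWithinAt) ?_ self_mem_Ici ht ht
    rw [interior_Ici]; exact hpos
  · refine monotoneOn_of_hasDerivWithinAt_nonneg (convex_Iic 0) (hcont.mono (subset_univ _))
      (fun s _ => (hg s).hasDerivWithinAt) ?_ ht self_mem_Iic ht
    rw [interior_Iic]; exact hneg

section InnerProductSpace

variable {E : Type*} [NormedAddCommGroup E] [InnerProductSpace ℝ E] [CompleteSpace E]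

theorem HasGradientAt.comp_hasDerivAt {f : E → ℝ} {g : E} {γ : ℝ → E} {v : E} {s : ℝ}
    (hf : HasGradientAt f g (γ s)) (hγ : HasDerivAt γ v s) :
    HasDerivAt (fun t => f (γ t)) (inner ℝ g v) s :=
  hf.hasFDerivAt.comp_hasDerivAt s hγ

theorem apply_add_smul_le_of_hasGradientAt {f : E → ℝ} {f' : E → E}
    (hf : ∀ y, HasGradientAt f (f' y) y) {x v : E} {L : ℝ}
    (hL : ∀ s : ℝ, |inner ℝ (f' (x + s • v)) v - inner ℝ (f' x) v| ≤ L * |s|) (t : ℝ) :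
    f (x + t • v) ≤ f x + t * inner ℝ (f' x) v + L / 2 * t ^ 2 := by
  have hline : ∀ s : ℝ, HasDerivAt (fun s : ℝ => x + s • v) v s := fun s => by
    simpa using ((hasDerivAt_id s).smul_const v).const_add x
  have hg : ∀ s, HasDerivAt (fun s => f (x + s • v) - s * inner ℝ (f' x) v - L / 2 * s ^ 2)
      (inner ℝ (f' (x + s • v)) v - inner ℝ (f' x) v - L * s) s := fun s => by
    refine ((((hf _).comp_hasDerivAt (hline s)).sub (hasDerivAt_mul_const _)).sub
      ((hasDerivAt_pow 2 s).const_mul (L / 2))).congr_deriv ?_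
    ring
  have := apply_le_apply_zero_of_hasDerivAt hg
    (fun s hs => by have := (abs_le.1 (hL s)).2; rw [abs_of_pos hs] at this; linarith)
    (fun s hs => by have := (abs_le.1 (hL s)).1; rw [abs_of_neg hs] at this; linarith) t
  simp only [zero_smul, add_zero, zero_mul, sub_zero, ne_eq, OfNat.ofNat_ne_zero,
    not_false_eq_true, zero_pow, mul_zero] at this
  linarith

theorem ConvexOn.add_inner_gradient_le {f : E → ℝ} {f' : E → E} (hconv : ConvexOn ℝ univ f)
    (hf : ∀ y, HasGradientAt f (f' y) y) (x y : E) :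
    f x + inner ℝ (f' x) (y - x) ≤ f y := by
  have hφ := (hf (AffineMap.lineMap x y (0 : ℝ))).comp_hasDerivAt AffineMap.hasDerivAt_lineMap
  rw [AffineMap.lineMap_apply_zero] at hφ
  have := (hconv.comp_affineMap (AffineMap.lineMap x y)).le_slope_of_hasDerivAt
    (mem_univ 0) (mem_univ 1) one_pos hφ
  simp only [slope_def_field, Function.comp_apply, AffineMap.lineMap_apply_one,
    AffineMap.lineMap_apply_zero, sub_zero, div_one] at this
  linarith

end InnerProductSpace

theorem StrongConvexOn.add_sq_le_of_isMinOn {F : Type*} [NormedAddCommGroup F] [NormedSpace ℝ F]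
    {s : Set F} {m : ℝ} {g : F → ℝ} (hg : StrongConvexOn s m g) {d t : F} (hd : IsMinOn g s d)
    (hds : d ∈ s) (hts : t ∈ s) : g d + m / 2 * ‖t - d‖ ^ 2 ≤ g t := by
  have hstep : ∀ l ∈ Ioo (0 : ℝ) 1, g d + (1 - l) * (m / 2 * ‖t - d‖ ^ 2) ≤ g t := by
    intro l ⟨hl0, hl1⟩
    have hmin := hd (hg.1 hds hts (sub_nonneg.2 hl1.le) hl0.le (sub_add_cancel 1 l))
    have hconv := hg.2 hds hts (sub_nonneg.2 hl1.le) hl0.le (sub_add_cancel 1 l)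
    rw [norm_sub_rev] at hconv
    simp only [smul_eq_mul, mem_ofPred_eq] at hmin hconv
    nlinarith
  have hlim : Tendsto (fun l : ℝ => g d + (1 - l) * (m / 2 * ‖t - d‖ ^ 2)) (𝓝[>] 0)
      (𝓝 (g d + m / 2 * ‖t - d‖ ^ 2)) := by
    have hc : Continuous fun l : ℝ => g d + (1 - l) * (m / 2 * ‖t - d‖ ^ 2) := by fun_prop
    exact (hc.tendsto' 0 _ (by simp)).mono_left nhdsWithin_le_nhds
  exact le_of_tendsto hlim (eventually_of_mem (Ioo_mem_nhdsGT one_pos) hstep)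

/-- The objective of a proximal coordinate step from `u`, with `a` the partial derivative there. -/
noncomputable def proxModel (a L : ℝ) (ψ : ℝ → ℝ) (u t : ℝ) : ℝ :=
  a * t + L / 2 * t ^ 2 + ψ (u + t)

theorem ConvexOn.proxModel_add_sq_le {ψ : ℝ → ℝ} (hψ : ConvexOn ℝ univ ψ) {a L u d : ℝ}
    (hd : ∀ t, proxModel a L ψ u d ≤ proxModel a L ψ u t) (t : ℝ) :
    proxModel a L ψ u d + L / 2 * (t - d) ^ 2 ≤ proxModel a L ψ u t := by
  have hlin : ConvexOn ℝ univ fun t : ℝ => a * t :=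
    (LinearMap.mulLeft ℝ a).convexOn convex_univ
  have hstrong : StrongConvexOn univ L (proxModel a L ψ u) := by
    rw [strongConvexOn_iff_convex]
    refine (hlin.add (by simpa using hψ.translate_right u)).congr fun s _ => ?_
    simp only [proxModel, Pi.add_apply, Function.comp_apply, Real.norm_eq_abs, sq_abs]
    ring
  simpa [Real.norm_eq_abs, sq_abs] using
    hstrong.add_sq_le_of_isMinOn (isMinOn_univ_iff.2 hd) (mem_univ d) (mem_univ t)

theorem ConvexOn.proxModel_three_point {ψ : ℝ → ℝ} (hψ : ConvexOn ℝ univ ψ) {a L u d : ℝ}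
    (hd : ∀ t, proxModel a L ψ u d ≤ proxModel a L ψ u t) (y : ℝ) :
    L * ((u + d - y) ^ 2 - (u - y) ^ 2) ≤ 2 * (a * (y - u) + ψ y - proxModel a L ψ u d) := by
  have := hψ.proxModel_add_sq_le hd (y - u)
  simp only [proxModel, add_sub_cancel] at this ⊢
  linear_combination 2 * this

section Coordinates

variable {ι : Type*} [DecidableEq ι]

theorem EuclideanSpace.add_smul_single_apply (x : EuclideanSpace ℝ ι) (i j : ι) (h : ℝ) :
    (x + h • EuclideanSpace.single i 1 : EuclideanSpace ℝ ι) j =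
      if j = i then x i + h else x j := by
  split_ifs with hj <;> simp [hj]

variable [Fintype ι]

theorem EuclideanSpace.sum_comp_add_smul_single (g : ι → ℝ → ℝ) (x : EuclideanSpace ℝ ι)
    (i : ι) (h : ℝ) :
    ∑ j, g j ((x + h • EuclideanSpace.single i 1 : EuclideanSpace ℝ ι) j) =
      ∑ j, g j (x j) - g i (x i) + g i (x i + h) := by
  rw [← add_sum_erase _ _ (mem_univ i), ← add_sum_erase _ _ (mem_univ i),
    EuclideanSpace.add_smul_single_apply, if_pos rfl]
  have hrest : ∀ j ∈ univ.erase i,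
      g j ((x + h • EuclideanSpace.single i 1 : EuclideanSpace ℝ ι) j) = g j (x j) :=
    fun j hj => by rw [EuclideanSpace.add_smul_single_apply, if_neg (ne_of_mem_erase hj)]
  rw [sum_congr rfl hrest]
  ring

theorem apply_add_smul_single_le {f : EuclideanSpace ℝ ι → ℝ}
    {f' : EuclideanSpace ℝ ι → EuclideanSpace ℝ ι} (hf : ∀ y, HasGradientAt f (f' y) y)
    {x : EuclideanSpace ℝ ι} {i : ι} {L : ℝ}
    (hL : ∀ h : ℝ, |f' (x + h • EuclideanSpace.single i 1) i - f' x i| ≤ L * |h|) (h : ℝ) :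
    f (x + h • EuclideanSpace.single i 1) ≤ f x + f' x i * h + L / 2 * h ^ 2 := by
  have := apply_add_smul_le_of_hasGradientAt hf (v := EuclideanSpace.single i 1) (L := L)
    (by simpa [EuclideanSpace.inner_single_right] using hL) h
  simpa [EuclideanSpace.inner_single_right, mul_comm] using this

theorem add_sum_apply_add_smul_single_le {f : EuclideanSpace ℝ ι → ℝ}
    {f' : EuclideanSpace ℝ ι → EuclideanSpace ℝ ι} (hf : ∀ y, HasGradientAt f (f' y) y)
    {x : EuclideanSpace ℝ ι} {i : ι} {L L' : ℝ}
    (hL : ∀ h : ℝ, |f' (x + h • EuclideanSpace.single i 1) i - f' x i| ≤ L * |h|) (hLL' : L ≤ L')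
    (ψ : ι → ℝ → ℝ) (h : ℝ) :
    f (x + h • EuclideanSpace.single i 1) +
        ∑ j, ψ j ((x + h • EuclideanSpace.single i 1 : EuclideanSpace ℝ ι) j) ≤
      f x + ∑ j, ψ j (x j) + (proxModel (f' x i) L' (ψ i) (x i) h - ψ i (x i)) := by
  have hquad : L / 2 * h ^ 2 ≤ L' / 2 * h ^ 2 := by gcongr
  have := apply_add_smul_single_le hf hL h
  rw [EuclideanSpace.sum_comp_add_smul_single, proxModel]
  linarith

end Coordinates

theorem ConvexOn.sum_mul_sub_add_sub_le {ι : Type*} [Fintype ι] {f : EuclideanSpace ℝ ι → ℝ}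
    {f' : EuclideanSpace ℝ ι → EuclideanSpace ℝ ι} (hconv : ConvexOn ℝ univ f)
    (hf : ∀ y, HasGradientAt f (f' y) y) (ψ : ι → ℝ → ℝ) (x y : EuclideanSpace ℝ ι) :
    ∑ i, (f' x i * (y i - x i) + ψ i (y i) - ψ i (x i)) ≤
      f y + ∑ i, ψ i (y i) - (f x + ∑ i, ψ i (x i)) := by
  have := hconv.add_inner_gradient_le hf x y
  simp only [PiLp.inner_apply, PiLp.sub_apply, Real.inner_apply] at this
  simp only [sum_sub_distrib, sum_add_distrib]
  linarith

theorem proximal_coordinate_descent_one_step_bound_general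
    {n : ℕ}
    (f : EuclideanSpace ℝ (Fin n) → ℝ)
    (f' : EuclideanSpace ℝ (Fin n) → EuclideanSpace ℝ (Fin n))
    (hconv : ConvexOn ℝ Set.univ f)
    (hderiv : ∀ y, HasGradientAt f (f' y) y)
    (Li : Fin n → ℝ)
    (hcoordlip : ∀ (y : EuclideanSpace ℝ (Fin n)) (i : Fin n) (h : ℝ),
      |f' (y + h • EuclideanSpace.single i 1) i - f' y i| ≤ Li i * |h|)
    (Lbar : Fin n → ℝ) (hLbar : ∀ i, Li i ≤ Lbar i)
    (ψ : Fin n → ℝ → ℝ) (hψconv : ∀ i, ConvexOn ℝ Set.univ (ψ i))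
    (F : EuclideanSpace ℝ (Fin n) → ℝ) (hF : ∀ y, F y = f y + ∑ i, ψ i (y i))
    (xbar : EuclideanSpace ℝ (Fin n))
    (p : Fin n → ℝ) (pmin : ℝ) (hpmin : 0 < pmin)
    (hp : ∀ i, pmin ≤ p i) (hpsum : ∑ i, p i = 1)
    (R : EuclideanSpace ℝ (Fin n) → ℝ)
    (hR : ∀ z, R z = ∑ i, Lbar i / p i * (z i - xbar i) ^ 2)
    (x : EuclideanSpace ℝ (Fin n))
    (d : Fin n → ℝ)
    (hd : ∀ i, ∀ t : ℝ,
      f' x i * d i + Lbar i / 2 * d i ^ 2 + ψ i (x i + d i) ≤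
        f' x i * t + Lbar i / 2 * t ^ 2 + ψ i (x i + t))
    (xi : Fin n → EuclideanSpace ℝ (Fin n))
    (hxi : ∀ i, xi i = x + d i • EuclideanSpace.single i 1) :
    ∑ i, p i * R (xi i) - R x ≤
      2 * (F xbar - F x) + 2 / pmin * (F x - ∑ i, p i * F (xi i)) := by
  have hp_pos : ∀ i, 0 < p i := fun i => hpmin.trans_le (hp i)
  set Δ : Fin n → ℝ := fun i => proxModel (f' x i) (Lbar i) (ψ i) (x i) (d i) - ψ i (x i)
  set b : Fin n → ℝ := fun i => f' x i * (xbar i - x i) + ψ i (xbar i) - ψ i (x i)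
  have hΔ_nonpos : ∀ i, Δ i ≤ 0 := fun i => by simpa [Δ, proxModel] using hd i 0
  have hF_step : ∀ i, F (xi i) ≤ F x + Δ i := fun i => by
    rw [hF, hF, hxi]
    exact add_sum_apply_add_smul_single_le hderiv (hcoordlip x i) (hLbar i) ψ (d i)
  have hR_step : ∀ i, p i * R (xi i) - p i * R x ≤ 2 * b i - 2 * Δ i := fun i => by
    have hR_xi := EuclideanSpace.sum_comp_add_smul_single
      (fun j s => Lbar j / p j * (s - xbar j) ^ 2) x i (d i)
    rw [hR, hR, hxi, hR_xi]
    linear_combination (hψconv i).proxModel_three_point (hd i) (xbar i) +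
      ((x i + d i - xbar i) ^ 2 - (x i - xbar i) ^ 2) * mul_div_cancel₀ (Lbar i) (hp_pos i).ne'
  have hb_sum : ∑ i, b i ≤ F xbar - F x := by
    simpa only [hF] using hconv.sum_mul_sub_add_sub_le hderiv ψ x xbar
  have hΔ_sum : pmin * ∑ i, -Δ i ≤ F x - ∑ i, p i * F (xi i) := by
    rw [mul_sum, ← one_mul (F x), ← hpsum, sum_mul, ← sum_sub_distrib]
    gcongr with i
    nlinarith [hF_step i, hΔ_nonpos i, hp i, hp_pos i]
  calc ∑ i, p i * R (xi i) - R x = ∑ i, (p i * R (xi i) - p i * R x) := by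
        rw [sum_sub_distrib, ← sum_mul, hpsum, one_mul]
    _ ≤ ∑ i, (2 * b i + 2 * -Δ i) := by gcongr with i; linarith [hR_step i]
    _ = 2 * ∑ i, b i + 2 * ∑ i, -Δ i := by rw [sum_add_distrib, mul_sum, mul_sum]
    _ ≤ 2 * (F xbar - F x) + 2 / pmin * (F x - ∑ i, p i * F (xi i)) := by
        rw [div_mul_eq_mul_div, mul_div_assoc]
        gcongr
        exact (le_div_iff₀' hpmin).2 hΔ_sum

/-- Single-step averaged inequality for stochastic proximal
coordinate descent: with `r(x)² = ∑ᵢ (L̄ᵢ/pᵢ)(xᵢ − x̄ᵢ)²` and proximal coordinate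
updates `x⁽ⁱ⁾ = x + dᵢ eᵢ`, we have
`∑ᵢ pᵢ r(x⁽ⁱ⁾)² − r(x)² ≤ 2(F* − F(x)) + (2/p_min)(F(x) − ∑ᵢ pᵢ F(x⁽ⁱ⁾))`. -/
theorem proximal_coordinate_descent_one_step_bound
    {n : ℕ}
    (f : EuclideanSpace ℝ (Fin n) → ℝ)
    (f' : EuclideanSpace ℝ (Fin n) → EuclideanSpace ℝ (Fin n))
    (hconv : ConvexOn ℝ Set.univ f)
    (hderiv : ∀ y, HasGradientAt f (f' y) y)
    (Li : Fin n → ℝ) (hLi : ∀ i, 0 < Li i)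
    (hcoordlip : ∀ (y : EuclideanSpace ℝ (Fin n)) (i : Fin n) (h : ℝ),
      |f' (y + h • EuclideanSpace.single i 1) i - f' y i| ≤ Li i * |h|)
    (Lbar : Fin n → ℝ) (hLbar : ∀ i, Li i ≤ Lbar i)
    (ψ : Fin n → ℝ → ℝ) (hψconv : ∀ i, ConvexOn ℝ Set.univ (ψ i))
    (F : EuclideanSpace ℝ (Fin n) → ℝ) (hF : ∀ y, F y = f y + ∑ i, ψ i (y i))
    (xbar : EuclideanSpace ℝ (Fin n)) (hxbar : ∀ y, F xbar ≤ F y)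
    (p : Fin n → ℝ) (pmin : ℝ) (hpmin : 0 < pmin)
    (hp : ∀ i, pmin ≤ p i) (hpsum : ∑ i, p i = 1)
    (R : EuclideanSpace ℝ (Fin n) → ℝ)
    (hR : ∀ z, R z = ∑ i, Lbar i / p i * (z i - xbar i) ^ 2)
    (x : EuclideanSpace ℝ (Fin n))
    (d : Fin n → ℝ)
    (hd : ∀ i, ∀ t : ℝ,
      f' x i * d i + Lbar i / 2 * d i ^ 2 + ψ i (x i + d i) ≤
        f' x i * t + Lbar i / 2 * t ^ 2 + ψ i (x i + t))
    (xi : Fin n → EuclideanSpace ℝ (Fin n))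
    (hxi : ∀ i, xi i = x + d i • EuclideanSpace.single i 1) :
    ∑ i, p i * R (xi i) - R x ≤
      2 * (F xbar - F x) + 2 / pmin * (F x - ∑ i, p i * F (xi i)) :=
  proximal_coordinate_descent_one_step_bound_general f f' hconv hderiv Li hcoordlip Lbar hLbar ψ
    hψconv F hF xbar p pmin hpmin hp hpsum R hR x d hd xi hxi
end
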